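/- arXiv:2504.21781 — 6 statements merged into one kernel-verified Lean document; each statement's English description precedes it below -/
import Mathlib

section
/- Let G be a connected finite simple graph on n ≥ 2 vertices, let 1 ≤ ℓ ≤ n, and let s_1, …, s_ℓ ∈ V(G) be (not necessarily distinct) source vertices. Let D_1, …, D_ℓ be independent random variables, each uniformly distributed on {1, …, ℓ}. Then for every constant c > 0 there is a constant C > 0 (depending only on c) such that with probability at least 1 − n^{−c} the following holds: for every vertex v ∈ V(G) and every integer r, the number of indices j ∈ {1, …, ℓ} with D_j + dist_G(s_j, v) = r is at most C·log n. -/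
/-!
Fix a vertex `v` and a round `r`. For each `j` at most one delay makes `j` broadcast at `v` in
round `r`, so at least `k` of the `ℓ` algorithms do so for at most `choose ℓ k * ℓ ^ (ℓ - k) ≤
ℓ ^ ℓ / k!` of the `ℓ ^ ℓ` delay vectors. Rounds beyond `2n` are never reached, so a union bound
over the `2n²` pairs `(v, r)` bounds the bad delay vectors by `2n² ℓ ^ ℓ / k!`. Taking
`k = ⌊C log n⌋ + 1` with `C = (c + 4) / log 2` gives `k! ≥ 2 ^ (k - 1) ≥ n ^ (c + 4) / 2`, and
`4 n ^ (-c - 2) ≤ n ^ (-c)`.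
-/

open Finset Nat

section AtMostOneHit

variable {ι α : Type*} [Fintype ι] [DecidableEq ι] [Fintype α]
  (P : ι → α → Prop) [∀ j, DecidablePred (P j)]

theorem card_filter_forall_mem_le (hP : ∀ j, #{a | P j a} ≤ 1) (S : Finset ι) :
    #{f : ι → α | ∀ j ∈ S, P j (f j)} ≤ Fintype.card α ^ (Fintype.card ι - #S) := by
  have hpi : ({f : ι → α | ∀ j ∈ S, P j (f j)} : Finset _) =
      Fintype.piFinset fun j => if j ∈ S then ({a | P j a} : Finset α) else univ := by
    ext f
    simp only [mem_filter, mem_univ, true_and, Fintype.mem_piFinset]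
    refine ⟨fun h j => ?_, fun h j hj => by simpa [hj] using h j⟩
    split_ifs with hj
    · simpa using h j hj
    · simp
  rw [hpi, Fintype.card_piFinset]
  calc ∏ j, #(if j ∈ S then ({a | P j a} : Finset α) else univ)
      ≤ ∏ j, if j ∈ Sᶜ then Fintype.card α else 1 :=
        prod_le_prod' fun j _ => by split_ifs <;> simp_all
    _ = Fintype.card α ^ (Fintype.card ι - #S) := by
        rw [prod_ite_mem, univ_inter, prod_const, card_compl]

theorem card_filter_le_card_hits_le_choose_mul_pow [DecidableEq α]
    (hP : ∀ j, #{a | P j a} ≤ 1) (k : ℕ) :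
    #{f : ι → α | k ≤ #{j | P j (f j)}} ≤
      (Fintype.card ι).choose k * Fintype.card α ^ (Fintype.card ι - k) := by
  have hcover : ({f : ι → α | k ≤ #{j | P j (f j)}} : Finset _) ⊆
      (powersetCard k univ).biUnion fun S => {f | ∀ j ∈ S, P j (f j)} := by
    intro f hf
    obtain ⟨S, hS, rfl⟩ := exists_subset_card_eq (mem_filter.1 hf).2
    simp only [mem_biUnion, mem_powersetCard, mem_filter, mem_univ, true_and]
    exact ⟨S, ⟨subset_univ S, rfl⟩, fun j hj => (mem_filter.1 (hS hj)).2⟩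
  calc _ ≤ _ := card_le_card hcover
    _ ≤ #(powersetCard k (univ : Finset ι)) * Fintype.card α ^ (Fintype.card ι - k) :=
        card_biUnion_le_card_mul _ _ _ fun S hS =>
          (mem_powersetCard.1 hS).2 ▸ card_filter_forall_mem_le P hP S
    _ = _ := by rw [card_powersetCard, Finset.card_univ]

end AtMostOneHit

theorem Nat.choose_mul_pow_sub_le_pow_div_factorial (n k : ℕ) :
    (n.choose k * n ^ (n - k) : ℝ) ≤ n ^ n / k ! := by
  rcases le_or_gt k n with hkn | hnk
  · calc (n.choose k * n ^ (n - k) : ℝ) ≤ n ^ k / k ! * n ^ (n - k) := by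
          gcongr; exact Nat.choose_le_pow_div k n
      _ = n ^ n / k ! := by rw [div_mul_eq_mul_div, ← pow_add, Nat.add_sub_cancel' hkn]
  · rw [Nat.choose_eq_zero_of_lt hnk, Nat.cast_zero, zero_mul]; positivity

theorem SimpleGraph.Connected.dist_lt_card {V : Type*} [Fintype V] {G : SimpleGraph V}
    (hG : G.Connected) (u v : V) : G.dist u v < Fintype.card V := by
  obtain ⟨p, hp, hlen⟩ := hG.exists_path_of_dist u v
  exact hlen ▸ hp.length_lt

theorem rpow_le_two_mul_factorial {x : ℝ} (hx : 0 < x) (a : ℝ) :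
    x ^ a ≤ 2 * (⌊a / Real.log 2 * Real.log x⌋₊ + 1)! := by
  set y := a / Real.log 2 * Real.log x
  have hxy : x ^ a = 2 ^ y := by
    rw [Real.rpow_def_of_pos hx, Real.rpow_def_of_pos two_pos]
    congr 1
    simp only [y]
    field_simp
  calc x ^ a = 2 * (2 : ℝ) ^ (y - 1) := by
        rw [hxy, Real.rpow_sub two_pos, Real.rpow_one]; ring
    _ ≤ 2 * (2 : ℝ) ^ (⌊y⌋₊ : ℝ) := by
        gcongr; · norm_num
        exact (Nat.sub_one_lt_floor y).le
    _ ≤ 2 * (⌊y⌋₊ + 1)! := by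
        rw [Real.rpow_natCast]
        gcongr
        have := Nat.factorial_mul_pow_le_factorial (m := 1) (n := ⌊y⌋₊)
        rw [add_comm]; exact_mod_cast (by simpa using this)

theorem two_mul_sq_div_factorial_le_rpow_neg (c : ℝ) {n : ℝ} (hn : 2 ≤ n) :
    n * (2 * n) / (⌊(c + 4) / Real.log 2 * Real.log n⌋₊ + 1)! ≤ n ^ (-c) := by
  have hn0 : 0 < n := by linarith
  have hfact := rpow_le_two_mul_factorial hn0 (c + 4)
  rw [div_le_iff₀ (by positivity)]
  have hsplit : n ^ (-c) * n ^ (c + 4) = n ^ 4 := by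
    rw [← Real.rpow_add hn0, neg_add_cancel_left, ← Real.rpow_natCast]; norm_num
  have := mul_le_mul_of_nonneg_left hfact (Real.rpow_nonneg hn0.le (-c))
  have hsq : 4 ≤ n ^ 2 := by nlinarith
  nlinarith [mul_le_mul_of_nonneg_left hsq (sq_nonneg n)]

theorem card_congested_delays_le {V : Type*} [Fintype V] {G : SimpleGraph V} (hG : G.Connected)
    {ℓ : ℕ} (hℓ : ℓ ≤ Fintype.card V) (s : Fin ℓ → V) {k : ℕ} (hk : 0 < k) :
    {D : Fin ℓ → Fin ℓ | ∃ v r, k ≤ {j | ((D j : ℕ) + 1) + G.dist (s j) v = r}.ncard}.ncard ≤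
      Fintype.card V * (2 * Fintype.card V) * (ℓ.choose k * ℓ ^ (ℓ - k)) := by
  classical
  simp only [Set.ncard_eq_toFinset_card', Set.toFinset_ofPred]
  set n := Fintype.card V
  have hcover : ({D : Fin ℓ → Fin ℓ | ∃ v r, k ≤ #{j | ((D j : ℕ) + 1) + G.dist (s j) v = r}} :
      Finset _) ⊆ univ.biUnion fun v => (range (2 * n)).biUnion fun r =>
        {D | k ≤ #{j | ((D j : ℕ) + 1) + G.dist (s j) v = r}} := by
    intro D hD
    obtain ⟨v, r, hvr⟩ := (mem_filter.1 hD).2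
    obtain ⟨j, hj⟩ := card_pos.1 (hk.trans_le hvr)
    have hr : r < 2 * n := by
      have := hG.dist_lt_card (s j) v
      have := (D j).isLt
      simp only [mem_filter, mem_univ, true_and] at hj
      omega
    simp only [mem_biUnion, mem_range, mem_filter, mem_univ, true_and]
    exact ⟨v, r, hr, hvr⟩
  refine (card_le_card hcover).trans <|
    (card_biUnion_le_card_mul _ _ (2 * n * (ℓ.choose k * ℓ ^ (ℓ - k))) fun v _ => ?_).trans_eq
      (by rw [Finset.card_univ]; ring)
  refine (card_biUnion_le_card_mul _ _ _ fun r _ => ?_).trans_eq (by rw [card_range])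
  have hunique : ∀ j, #{d : Fin ℓ | (d : ℕ) + 1 + G.dist (s j) v = r} ≤ 1 := fun j =>
    card_le_one.2 fun a ha b hb => by
      simp only [mem_filter, mem_univ, true_and] at ha hb
      omega
  simpa using card_filter_le_card_hits_le_choose_mul_pow _ hunique k

/-- **Random-delay BFS scheduling, broadcast congestion.** For every `c > 0` there is `C > 0`
(depending only on `c`) such that for any connected graph `G` on `n ≥ 2` vertices, any
`1 ≤ ℓ ≤ n` and sources `s 0, …, s (ℓ-1)`, if the delays `D j` are independent and uniform on
`{1, …, ℓ}` (modelled by the uniform distribution on functions `D : Fin ℓ → Fin ℓ`, with the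
delay being `D j + 1`), then with probability at least `1 - n^{-c}`: for every vertex `v` and
every round `r`, at most `C · log n` indices `j` satisfy `D j + dist (s j) v = r`. -/
theorem bfs_random_delay_broadcast_congestion :
    ∀ c : ℝ, 0 < c → ∃ C : ℝ, 0 < C ∧
      ∀ (V : Type) [Fintype V] (G : SimpleGraph V), G.Connected →
        2 ≤ Fintype.card V →
        ∀ ℓ : ℕ, 1 ≤ ℓ → ℓ ≤ Fintype.card V →
        ∀ s : Fin ℓ → V,
          (1 - (Fintype.card V : ℝ) ^ (-c)) * (ℓ : ℝ) ^ ℓ ≤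
            (({D : Fin ℓ → Fin ℓ |
                ∀ (v : V) (r : ℕ),
                  (({j : Fin ℓ | ((D j : ℕ) + 1) + G.dist (s j) v = r}.ncard : ℝ)) ≤
                    C * Real.log (Fintype.card V)}.ncard : ℝ)) := by
  intro c hc
  have hlog2 := Real.log_pos one_lt_two
  refine ⟨(c + 4) / Real.log 2, by positivity, ?_⟩
  intro V _ G hG hn ℓ _ hℓn s
  set n := Fintype.card V
  set k := ⌊(c + 4) / Real.log 2 * Real.log n⌋₊ + 1
  set good := {D : Fin ℓ → Fin ℓ | ∀ (v : V) (r : ℕ),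
    (({j : Fin ℓ | ((D j : ℕ) + 1) + G.dist (s j) v = r}.ncard : ℝ)) ≤
      (c + 4) / Real.log 2 * Real.log n}
  have hn2 : (2 : ℝ) ≤ n := by exact_mod_cast hn
  have hbad : goodᶜ ⊆ {D | ∃ v r, k ≤ {j | ((D j : ℕ) + 1) + G.dist (s j) v = r}.ncard} := by
    intro D hD
    simp only [good, Set.mem_compl_iff, Set.mem_ofPred_eq, not_forall, not_le] at hD
    obtain ⟨v, r, hvr⟩ := hD
    have hlogn := Real.log_nonneg (by linarith : (1 : ℝ) ≤ n)
    exact ⟨v, r, (Nat.floor_lt (by positivity)).2 hvr⟩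
  have hbad_card : (goodᶜ.ncard : ℝ) ≤ n ^ (-c) * ℓ ^ ℓ := calc
    (goodᶜ.ncard : ℝ) ≤ n * (2 * n) * (ℓ.choose k * ℓ ^ (ℓ - k)) := by
        exact_mod_cast (Set.ncard_le_ncard hbad).trans
          (card_congested_delays_le hG hℓn s (Nat.succ_pos _))
    _ ≤ n * (2 * n) * (ℓ ^ ℓ / k !) := by
        gcongr; exact Nat.choose_mul_pow_sub_le_pow_div_factorial ℓ k
    _ = n * (2 * n) / k ! * ℓ ^ ℓ := by ring
    _ ≤ n ^ (-c) * ℓ ^ ℓ := by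
        gcongr; exact two_mul_sq_div_factorial_le_rpow_neg c hn2
  have htotal : (good.ncard : ℝ) + goodᶜ.ncard = ℓ ^ ℓ := by
    rw [← Nat.cast_add, Set.ncard_add_ncard_compl]; simp
  linarith
end

section
/- Let G be a connected finite simple graph on n ≥ 2 vertices, let 1 ≤ ℓ ≤ n, and let s_1, …, s_ℓ ∈ V(G) be (not necessarily distinct) source vertices. Let D_1, …, D_ℓ be independent random variables, each uniformly distributed on {1, …, ℓ}. Then for every constant c > 0 there is a constant C > 0 (depending only on c) such that with probability at least 1 − n^{−c} the following holds: for every vertex v ∈ V(G) and every integer r, the number of indices j ∈ {1, …, ℓ} for which there exists a vertex u in the closed neighborhood N_G[v] = {v} ∪ {neighbors of v} with D_j + dist_G(s_j, u) = r is at most C·log n. -/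
/-!
Fix a vertex `v` and a round `r`. The vertices of `N[v]` are within distance one of `v`, so BFS
`j` makes some vertex of `N[v]` broadcast in round `r` for at most three of the `ℓ` values of its
delay. Delays being independent, `k` prescribed algorithms all do so with probability at most
`(3/ℓ)^k`, and a union bound over the `k`-sets of algorithms bounds the probability that `v`
hears `k` of them in round `r` by `choose ℓ k (3/ℓ)^k ≤ 3^k/k! ≤ e^6 2^(-k)`. Only the rounds
`r < ℓ + n` are relevant, so a union bound over the at most `2n²` pairs `(v, r)` with
`k ≈ (2c + 24) log n` leaves a failure probability of at most `n^(-c)`.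
-/

open Finset Real
open scoped Nat

section HitCount

variable {ι α : Type*} [Fintype ι] [Fintype α] [DecidableEq α]

def hitCount (B : ι → Finset α) (D : ι → α) : ℕ := #{j | D j ∈ B j}

/-- Union bound over the `k`-sets of coordinates that could all be hits. -/
theorem card_filter_le_hitCount_le [DecidableEq ι] (B : ι → Finset α) {b : ℕ}
    (hB : ∀ j, #(B j) ≤ b) (k : ℕ) :
    #{D : ι → α | k ≤ hitCount B D} ≤
      (Fintype.card ι).choose k * (b ^ k * Fintype.card α ^ (Fintype.card ι - k)) := by
  have hcover : ({D : ι → α | k ≤ hitCount B D} : Finset (ι → α)) ⊆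
      (powersetCard k univ).biUnion fun S =>
        Fintype.piFinset fun j => if j ∈ S then B j else univ := by
    intro D hD
    obtain ⟨S, hSsub, hScard⟩ := exists_subset_card_eq (mem_filter.mp hD).2
    refine mem_biUnion.mpr ⟨S, mem_powersetCard.mpr ⟨subset_univ S, hScard⟩, ?_⟩
    refine Fintype.mem_piFinset.mpr fun j => ?_
    split_ifs with hj
    · exact (mem_filter.mp (hSsub hj)).2
    · exact mem_univ _
  have hbox : ∀ S ∈ powersetCard k (univ : Finset ι),
      #(Fintype.piFinset fun j => if j ∈ S then B j else univ) ≤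
        b ^ k * Fintype.card α ^ (Fintype.card ι - k) := by
    intro S hS
    obtain ⟨-, hScard⟩ := mem_powersetCard.mp hS
    rw [Fintype.card_piFinset, ← prod_mul_prod_compl S]
    gcongr
    · rw [← hScard]
      exact prod_le_pow_card _ _ _ fun j hj => by simpa [hj] using hB j
    · rw [prod_congr rfl fun j hj => by rw [if_neg (mem_compl.mp hj), Finset.card_univ],
        prod_const, card_compl, hScard]
  calc #{D : ι → α | k ≤ hitCount B D}
      ≤ ∑ S ∈ powersetCard k univ, #(Fintype.piFinset fun j => if j ∈ S then B j else univ) :=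
        (card_le_card hcover).trans card_biUnion_le
    _ ≤ ∑ S ∈ powersetCard k (univ : Finset ι), b ^ k * Fintype.card α ^ (Fintype.card ι - k) :=
        sum_le_sum hbox
    _ = _ := by rw [sum_const, card_powersetCard, Finset.card_univ, smul_eq_mul]

theorem card_filter_le_hitCount_le_mul_pow_div_factorial (B : α → Finset α) {b : ℕ}
    (hB : ∀ j, #(B j) ≤ b) (k : ℕ) :
    (#{D : α → α | k ≤ hitCount B D} : ℝ) ≤ Fintype.card α ^ Fintype.card α * (b ^ k / k !) := by
  set m := Fintype.card α
  have hcount : (#{D : α → α | k ≤ hitCount B D} : ℝ) ≤ m.choose k * (b ^ k * m ^ (m - k)) := by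
    exact_mod_cast card_filter_le_hitCount_le B hB k
  rcases lt_or_ge m k with hmk | hkm
  · rw [Nat.choose_eq_zero_of_lt hmk, Nat.cast_zero, zero_mul] at hcount
    exact hcount.trans (by positivity)
  calc (#{D : α → α | k ≤ hitCount B D} : ℝ) ≤ m.choose k * (b ^ k * m ^ (m - k)) := hcount
    _ ≤ m ^ k / k ! * (b ^ k * m ^ (m - k)) := by gcongr; exact Nat.choose_le_pow_div k m
    _ = (m : ℝ) ^ (k + (m - k)) * (b ^ k / k !) := by ring
    _ = m ^ m * (b ^ k / k !) := by rw [Nat.add_sub_cancel' hkm]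

end HitCount

theorem pow_div_factorial_le_exp_two_mul_div_two_pow {x : ℝ} (hx : 0 ≤ x) (k : ℕ) :
    x ^ k / k ! ≤ exp (2 * x) / 2 ^ k := by
  rw [le_div_iff₀ (by positivity)]
  calc x ^ k / k ! * 2 ^ k = (2 * x) ^ k / k ! := by ring
    _ ≤ exp (2 * x) := pow_div_factorial_le_exp _ (by positivity) k

theorem two_mul_sq_mul_three_pow_div_factorial_le_rpow_neg {n c : ℝ} {k : ℕ} (hn : 2 ≤ n)
    (hc : 0 ≤ c) (hk : (2 * c + 24) * log n ≤ k) :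
    2 * n ^ 2 * (3 ^ k / k !) ≤ n ^ (-c) := by
  have hn0 : 0 < n := by linarith
  -- `log 2 > 1/2` gives `2^k ≥ n^(c + 12)`, and `2 e^6 < 2^10 ≤ n^10`.
  have hexp : 2 * n ^ 2 * exp 6 ≤ n ^ (-c) * 2 ^ k := by
    have hlog2 : 0.6931471803 < log 2 := log_two_gt_d9
    have hlog2' : log 2 < 0.6931471808 := log_two_lt_d9
    have hlogn : log 2 ≤ log n := log_le_log (by norm_num) hn
    have h1 : (2 * c + 24) * log n * log 2 ≤ k * log 2 := by gcongr
    have h2 : 0 ≤ (c + 12) * log n * (2 * log 2 - 1) := by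
      apply mul_nonneg (mul_nonneg _ _) _ <;> linarith
    rw [← log_le_log_iff (by positivity) (by positivity), log_mul (by positivity) (by positivity),
      log_mul (by positivity) (by positivity), log_mul (by positivity) (by positivity), log_pow,
      log_pow, log_exp, log_rpow hn0]
    push_cast
    nlinarith
  calc 2 * n ^ 2 * (3 ^ k / k !) ≤ 2 * n ^ 2 * (exp (2 * 3) / 2 ^ k) :=
        mul_le_mul_of_nonneg_left (pow_div_factorial_le_exp_two_mul_div_two_pow (by norm_num) k)
          (by positivity)
    _ ≤ n ^ (-c) := by
        rw [mul_div_assoc', div_le_iff₀ (by positivity)]; norm_num; exact hexp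

namespace SimpleGraph

variable {V : Type*} (G : SimpleGraph V)

theorem dist_lt_card [Fintype V] (u v : V) : G.dist u v < Fintype.card V := by
  by_cases huv : G.Reachable u v
  · obtain ⟨p, hp⟩ := huv.exists_walk_length_eq_dist
    exact hp ▸ (p.isPath_of_length_eq_dist hp).length_lt
  · rw [dist_eq_zero_of_not_reachable huv]
    exact Fintype.card_pos_iff.mpr ⟨u⟩

open Classical in
/-- Delay `d : Fin ℓ` stands for the start round `d + 1`; these are the delays for which some
vertex of `N[v]` broadcasts, in the BFS from `s`, in round `r`. -/
noncomputable def receiveDelays (ℓ : ℕ) (s v : V) (r : ℕ) : Finset (Fin ℓ) :=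
  {d | ∃ u, (u = v ∨ G.Adj v u) ∧ (d : ℕ) + 1 + G.dist s u = r}

section

variable {G} {ℓ : ℕ} {s v : V} {r : ℕ}

theorem mem_receiveDelays {d : Fin ℓ} :
    d ∈ G.receiveDelays ℓ s v r ↔ ∃ u, (u = v ∨ G.Adj v u) ∧ (d : ℕ) + 1 + G.dist s u = r := by
  simp [receiveDelays]

/-- Neighbours of `v` are at distance `dist s v - 1`, `dist s v` or `dist s v + 1` from `s`,
and `d` is determined by that distance. -/
theorem card_receiveDelays_le_three : #(G.receiveDelays ℓ s v r) ≤ 3 := by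
  have hmaps : ∀ d ∈ G.receiveDelays ℓ s v r,
      (d : ℕ) + 1 ≤ r ∧ r - 1 - d ∈ Icc (G.dist s v - 1) (G.dist s v + 1) := by
    intro d hd
    obtain ⟨u, hu | hu, rfl⟩ := mem_receiveDelays.mp hd
    · subst hu; simp only [mem_Icc]; omega
    · have := hu.diff_dist_adj (u := s)
      simp only [mem_Icc]; omega
  refine (card_le_card_of_injOn (fun d : Fin ℓ => r - 1 - d) (fun d hd => (hmaps d hd).2)
    ?_).trans ?_
  · intro d₁ h₁ d₂ h₂ h
    have := (hmaps d₁ h₁).1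
    have := (hmaps d₂ h₂).1
    exact Fin.ext (by simp only at h; omega)
  · rw [Nat.card_Icc]; omega

theorem lt_add_card_of_mem_receiveDelays [Fintype V] {d : Fin ℓ}
    (hd : d ∈ G.receiveDelays ℓ s v r) : r < ℓ + Fintype.card V := by
  obtain ⟨u, -, rfl⟩ := mem_receiveDelays.mp hd
  have := G.dist_lt_card s u
  omega

end

variable {ℓ : ℕ}

theorem ncard_setOf_exists_dist_eq_hitCount_receiveDelays (s : Fin ℓ → V) (v : V) (r : ℕ)
    (D : Fin ℓ → Fin ℓ) :
    {j | ∃ u, (u = v ∨ G.Adj v u) ∧ (D j : ℕ) + 1 + G.dist (s j) u = r}.ncard =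
      hitCount (fun j => G.receiveDelays ℓ (s j) v r) D := by
  rw [hitCount, ← Set.ncard_coe_finset]
  congr 1
  ext j
  rw [Set.mem_ofPred_eq, mem_coe, mem_filter, mem_receiveDelays]
  simp

def congestedDelays (s : Fin ℓ → V) (k : ℕ) : Set (Fin ℓ → Fin ℓ) :=
  {D | ∃ v r, k ≤ hitCount (fun j => G.receiveDelays ℓ (s j) v r) D}

theorem ncard_congestedDelays_le [Fintype V] (hℓ : ℓ ≤ Fintype.card V) (s : Fin ℓ → V) {k : ℕ}
    (hk : 0 < k) :
    ((G.congestedDelays s k).ncard : ℝ) ≤ 2 * Fintype.card V ^ 2 * ℓ ^ ℓ * (3 ^ k / k !) := by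
  set n := Fintype.card V
  have hcover : G.congestedDelays s k ⊆ ↑((univ ×ˢ range (ℓ + n)).biUnion
        fun p => {D | k ≤ hitCount (fun j => G.receiveDelays ℓ (s j) p.1 p.2) D}) := by
    rintro D ⟨v, r, hvr⟩
    obtain ⟨j, hj⟩ := card_pos.mp (hk.trans_le hvr)
    have hr : r < ℓ + n := lt_add_card_of_mem_receiveDelays (mem_filter.mp hj).2
    exact mem_biUnion.mpr ⟨(v, r), mem_product.mpr ⟨mem_univ v, mem_range.mpr hr⟩,
      mem_filter.mpr ⟨mem_univ D, hvr⟩⟩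
  calc _ ≤ ∑ p ∈ univ ×ˢ range (ℓ + n),
        (#{D | k ≤ hitCount (fun j => G.receiveDelays ℓ (s j) p.1 p.2) D} : ℝ) := by
        exact_mod_cast ((Set.ncard_le_ncard hcover).trans_eq (Set.ncard_coe_finset _)).trans
          card_biUnion_le
    _ ≤ ∑ _p ∈ univ ×ˢ range (ℓ + n), (ℓ ^ ℓ * (3 ^ k / k !) : ℝ) := sum_le_sum fun p _ => by
        simpa using card_filter_le_hitCount_le_mul_pow_div_factorial _
          (fun _ => card_receiveDelays_le_three) k
    _ = n * (ℓ + n) * (ℓ ^ ℓ * (3 ^ k / k !)) := by simp [card_product, n]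
    _ ≤ n * (2 * n) * (ℓ ^ ℓ * (3 ^ k / k !)) := by
        gcongr; linarith [(by exact_mod_cast hℓ : (ℓ : ℝ) ≤ n)]
    _ = _ := by ring

end SimpleGraph

/-- **Random-delay BFS scheduling, receive congestion.** For every `c > 0` there is `C > 0`
(depending only on `c`) such that for any connected graph `G` on `n ≥ 2` vertices, any
`1 ≤ ℓ ≤ n` and sources `s 0, …, s (ℓ-1)`, if the delays `D j` are independent and uniform on
`{1, …, ℓ}` (modelled by the uniform distribution on functions `D : Fin ℓ → Fin ℓ`, with the
delay being `D j + 1`), then with probability at least `1 - n^{-c}`: for every vertex `v` and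
every round `r`, at most `C · log n` indices `j` admit a vertex `u` in the closed neighborhood
of `v` with `D j + dist (s j) u = r`. -/
theorem bfs_random_delay_receive_congestion :
    ∀ c : ℝ, 0 < c → ∃ C : ℝ, 0 < C ∧
      ∀ (V : Type) [Fintype V] (G : SimpleGraph V), G.Connected →
        2 ≤ Fintype.card V →
        ∀ ℓ : ℕ, 1 ≤ ℓ → ℓ ≤ Fintype.card V →
        ∀ s : Fin ℓ → V,
          (1 - (Fintype.card V : ℝ) ^ (-c)) * (ℓ : ℝ) ^ ℓ ≤
            (({D : Fin ℓ → Fin ℓ |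
                ∀ (v : V) (r : ℕ),
                  (({j : Fin ℓ |
                      ∃ u : V, (u = v ∨ G.Adj v u) ∧
                        ((D j : ℕ) + 1) + G.dist (s j) u = r}.ncard : ℝ)) ≤
                    C * Real.log (Fintype.card V)}.ncard : ℝ)) := by
  intro c hc
  refine ⟨2 * c + 24, by positivity, ?_⟩
  intro V _ G _ hn ℓ _ hℓ s
  set n := Fintype.card V
  set k := ⌊(2 * c + 24) * log n⌋₊ + 1
  set Bad := G.congestedDelays s k
  have hlogn : 0 ≤ (2 * c + 24) * log n := by
    have : (1 : ℝ) ≤ n := by exact_mod_cast (by omega : 1 ≤ n)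
    positivity
  have hgood : {D : Fin ℓ → Fin ℓ | ∀ (v : V) (r : ℕ),
      (({j : Fin ℓ | ∃ u : V, (u = v ∨ G.Adj v u) ∧
          ((D j : ℕ) + 1) + G.dist (s j) u = r}.ncard : ℝ)) ≤ (2 * c + 24) * log n} = Badᶜ := by
    ext D
    simp only [G.ncard_setOf_exists_dist_eq_hitCount_receiveDelays, ← Nat.le_floor_iff hlogn,
      ← Nat.lt_add_one_iff, Set.mem_compl_iff, Set.mem_ofPred_eq, Bad,
      SimpleGraph.congestedDelays, k]
    push Not
    rfl
  have hBad : (Bad.ncard : ℝ) ≤ n ^ (-c) * ℓ ^ ℓ :=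
    calc (Bad.ncard : ℝ) ≤ 2 * n ^ 2 * ℓ ^ ℓ * (3 ^ k / k !) :=
          G.ncard_congestedDelays_le hℓ s (Nat.succ_pos _)
      _ = 2 * n ^ 2 * (3 ^ k / k !) * ℓ ^ ℓ := by ring
      _ ≤ n ^ (-c) * ℓ ^ ℓ := by
          gcongr
          exact two_mul_sq_mul_three_pow_div_factorial_le_rpow_neg (by exact_mod_cast hn) hc.le
            (by simpa [k] using (Nat.lt_floor_add_one ((2 * c + 24) * log n)).le)
  have hsplit : (Badᶜ.ncard : ℝ) + Bad.ncard = ℓ ^ ℓ := by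
    exact_mod_cast (Set.ncard_compl_add_ncard Bad).trans (by simp)
  rw [hgood]
  linarith
end

section
/- There is a universal constant C > 0 such that for every connected finite simple graph G on n ≥ 2 vertices and all positive integers k and W, there exists a finite collection 𝒞 of vertex subsets of G satisfying: (1) every S ∈ 𝒞 induces a connected subgraph of G of diameter at most C·k·W; (2) every vertex of G belongs to at most C·k·n^{1/k}·log n members of 𝒞; and (3) for every vertex v there is some S ∈ 𝒞 containing the entire ball B_G(v, W) = { u : dist_G(v,u) ≤ W }. -/
/-!
Ball growing (Awerbuch–Peleg) with `q = n^{1/k}`. From a centre `v` whose ball is not yet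
covered, grow layers `T₀ = {v}`, `T_{i+1}` = the remaining centres whose `W`-ball meets the
`W`-neighbourhood of `T_i`. As `|T_i| ≤ n = q^k`, some `s < k` has `|T_{s+1}| ≤ q |T_s|`; the
`W`-neighbourhood of `T_s` is then a cluster of radius `(2s+1)W` that contains the balls of `T_s`
and misses the balls of all centres outside `T_{s+1}`. Discarding `T_{s+1}` and repeating yields
one phase of pairwise disjoint clusters serving at least a `1/q` fraction of the remaining
centres, so `q log n + 1` phases serve everything, and each vertex lies in one cluster per phase.
-/

namespace SparseCover

open Finset SimpleGraph

section Clusters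

variable {V : Type*} {G : SimpleGraph V}

def IsClusterOfRadius (G : SimpleGraph V) (r : ℕ) (Z : Set V) : Prop :=
  ∃ z ∈ Z, ∀ x ∈ Z, ∃ p : G.Walk z x, p.length ≤ r ∧ ∀ y ∈ p.support, y ∈ Z

lemma IsClusterOfRadius.mono {r r' : ℕ} {Z : Set V} (h : IsClusterOfRadius G r Z)
    (hr : r ≤ r') : IsClusterOfRadius G r' Z := by
  obtain ⟨z, hz, hwalk⟩ := h
  exact ⟨z, hz, fun x hx => (hwalk x hx).imp fun _ hp => ⟨hp.1.trans hr, hp.2⟩⟩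

lemma IsClusterOfRadius.induce_connected_and_dist_le {r : ℕ} {Z : Set V}
    (h : IsClusterOfRadius G r Z) :
    (G.induce Z).Connected ∧ ∀ u v : Z, (G.induce Z).dist u v ≤ 2 * r := by
  obtain ⟨z, hz, hwalk⟩ := h
  have hcentre :
      ∀ x : Z, (G.induce Z).Reachable ⟨z, hz⟩ x ∧ (G.induce Z).dist ⟨z, hz⟩ x ≤ r := by
    rintro ⟨x, hx⟩
    obtain ⟨p, hp, hsupp⟩ := hwalk x hx
    have hlen : (p.induce Z hsupp).length = p.length := by
      conv_rhs => rw [← p.map_induce hsupp]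
      exact (Walk.length_map _ _).symm
    exact ⟨(p.induce Z hsupp).reachable, (dist_le _).trans (hlen ▸ hp)⟩
  have hconn : (G.induce Z).Connected :=
    (connected_iff_exists_forall_reachable _).2 ⟨_, fun x => (hcentre x).1⟩
  refine ⟨hconn, fun u v => ?_⟩
  calc (G.induce Z).dist u v
      ≤ (G.induce Z).dist ⟨z, hz⟩ u + (G.induce Z).dist ⟨z, hz⟩ v := by
        exact hconn.dist_triangle.trans_eq (by rw [dist_comm])
    _ ≤ 2 * r := by linarith [(hcentre u).2, (hcentre v).2]

end Clusters

lemma exists_lt_succ_le_mul {a : ℕ → ℝ} {q : ℝ} {k : ℕ} (hq : 0 ≤ q) (hk : 0 < k)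
    (h0 : 1 ≤ a 0) (hak : a k ≤ q ^ k) : ∃ s < k, a (s + 1) ≤ q * a s := by
  by_contra! hgrow
  have hpow : ∀ i ≤ k, q ^ i ≤ a i := by
    intro i
    induction i with
    | zero => simpa using h0
    | succ i ih =>
      intro hi
      calc q ^ (i + 1) = q * q ^ i := pow_succ' q i
        _ ≤ q * a i := mul_le_mul_of_nonneg_left (ih (by omega)) hq
        _ ≤ a (i + 1) := (hgrow i (by omega)).le
  obtain ⟨j, rfl⟩ : ∃ j, k = j + 1 := ⟨k - 1, by omega⟩
  have := mul_le_mul_of_nonneg_left (hpow j (by omega)) hq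
  rw [pow_succ'] at hak
  linarith [hgrow j (by omega)]

lemma one_le_mul_log_sub_log {q m d : ℝ} (hd : 0 < d) (hdm : d ≤ m) (h : m ≤ q * (m - d)) :
    1 ≤ q * (Real.log m - Real.log d) := by
  have hm : 0 < m := hd.trans_le hdm
  have hq : 0 ≤ q := by nlinarith
  have hlog : 1 - d / m ≤ Real.log m - Real.log d := by
    rw [← Real.log_div hm.ne' hd.ne']
    simpa [inv_div] using Real.one_sub_inv_le_log_of_pos (div_pos hm hd)
  calc 1 ≤ q * (1 - d / m) := by
        rw [one_sub_div hm.ne', mul_div_assoc', le_div_iff₀ hm]; linarith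
    _ ≤ q * (Real.log m - Real.log d) := mul_le_mul_of_nonneg_left hlog hq

lemma card_filter_mem_le_one {V : Type*} [DecidableEq V] {𝒞 : Finset (Finset V)}
    (h : (𝒞 : Set (Finset V)).PairwiseDisjoint id) (x : V) : #{Z ∈ 𝒞 | x ∈ Z} ≤ 1 := by
  refine card_le_one.2 fun Y hY Z hZ => ?_
  rw [mem_filter] at hY hZ
  by_contra hne
  exact Finset.disjoint_left.1 (h hY.1 hZ.1 hne) hY.2 hZ.2

section Balls

variable {V : Type*} [Fintype V] {G : SimpleGraph V} {W : ℕ} {u v : V}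

noncomputable def ball (G : SimpleGraph V) (W : ℕ) (v : V) : Finset V := {u | G.dist v u ≤ W}

@[simp] lemma mem_ball : u ∈ ball G W v ↔ G.dist v u ≤ W := by simp [ball]

lemma mem_ball_self : v ∈ ball G W v := by simp

lemma exists_walk_support_subset_ball (hG : G.Connected) (hu : u ∈ ball G W v) :
    ∃ p : G.Walk v u, p.length ≤ W ∧ ∀ y ∈ p.support, y ∈ ball G W v := by
  classical
  obtain ⟨p, hp⟩ := hG.exists_walk_length_eq_dist v u
  have hpW : p.length ≤ W := hp ▸ mem_ball.1 hu
  exact ⟨p, hpW, fun y hy =>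
    mem_ball.2 <| ((dist_le _).trans (p.length_takeUntil_le_length hy)).trans hpW⟩

variable [DecidableEq V]

noncomputable def nbhd (G : SimpleGraph V) (W : ℕ) (T : Finset V) : Finset V :=
  T.biUnion (ball G W)

lemma ball_subset_nbhd {T : Finset V} (hu : u ∈ T) : ball G W u ⊆ nbhd G W T :=
  subset_biUnion_of_mem _ hu

lemma nbhd_mono {T T' : Finset V} (h : T ⊆ T') : nbhd G W T ⊆ nbhd G W T' :=
  biUnion_subset_biUnion_of_subset_left _ h

end Balls

section Layers

variable {V : Type*} [Fintype V] [DecidableEq V] {G : SimpleGraph V} {W : ℕ} {A : Finset V}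
  {u v : V}

noncomputable def layer (G : SimpleGraph V) (W : ℕ) (A : Finset V) (v : V) : ℕ → Finset V
  | 0 => {v}
  | i + 1 => {u ∈ A | ¬Disjoint (ball G W u) (nbhd G W (layer G W A v i))}

lemma layer_subset (hv : v ∈ A) : ∀ i, layer G W A v i ⊆ A
  | 0 => by simpa [layer]
  | _ + 1 => filter_subset _ _

lemma monotone_layer (hv : v ∈ A) : Monotone (layer G W A v) :=
  monotone_nat_of_le_succ fun i u hu => mem_filter.2 ⟨layer_subset hv i hu,
    not_disjoint_iff.2 ⟨u, mem_ball_self, ball_subset_nbhd hu mem_ball_self⟩⟩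

lemma disjoint_ball_nbhd_layer {i : ℕ} (hu : u ∈ A) (hu' : u ∉ layer G W A v (i + 1)) :
    Disjoint (ball G W u) (nbhd G W (layer G W A v i)) := by
  by_contra h
  exact hu' (mem_filter.2 ⟨hu, h⟩)

lemma exists_walk_of_mem_nbhd_layer (hG : G.Connected) (hv : v ∈ A) :
    ∀ i, ∀ x ∈ nbhd G W (layer G W A v i), ∃ p : G.Walk v x,
      p.length ≤ (2 * i + 1) * W ∧ ∀ y ∈ p.support, y ∈ nbhd G W (layer G W A v i)
  | 0, x, hx => by
    simp only [nbhd, layer, singleton_biUnion] at hx ⊢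
    obtain ⟨p, hp, hsupp⟩ := exists_walk_support_subset_ball hG hx
    exact ⟨p, by omega, hsupp⟩
  | i + 1, x, hx => by
    obtain ⟨u, hu, hxu⟩ := mem_biUnion.1 hx
    obtain ⟨x', hx'u, hx'⟩ := not_disjoint_iff.1 (mem_filter.1 hu).2
    obtain ⟨p₁, hp₁, hsupp₁⟩ := exists_walk_of_mem_nbhd_layer hG hv i x' hx'
    obtain ⟨p₂, hp₂, hsupp₂⟩ := exists_walk_support_subset_ball hG hx'u
    obtain ⟨p₃, hp₃, hsupp₃⟩ := exists_walk_support_subset_ball hG hxu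
    have hball := ball_subset_nbhd (G := G) (W := W) hu
    have hprev := nbhd_mono (G := G) (W := W) (monotone_layer (G := G) (W := W) hv i.le_succ)
    refine ⟨(p₁.append p₂.reverse).append p₃, ?_, ?_⟩
    · simp only [Walk.length_append, Walk.length_reverse]
      nlinarith
    · simp only [Walk.mem_support_append_iff, Walk.support_reverse, List.mem_reverse]
      rintro y ((hy | hy) | hy)
      exacts [hprev (hsupp₁ y hy), hball (hsupp₂ y hy), hball (hsupp₃ y hy)]

lemma isClusterOfRadius_nbhd_layer (hG : G.Connected) (hv : v ∈ A) (i : ℕ) :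
    IsClusterOfRadius G ((2 * i + 1) * W) (nbhd G W (layer G W A v i) : Set V) :=
  ⟨v, ball_subset_nbhd (monotone_layer hv (Nat.zero_le i) (mem_singleton_self v)) mem_ball_self,
    exists_walk_of_mem_nbhd_layer hG hv i⟩

end Layers

section Phases

variable {V : Type*} [Fintype V] [DecidableEq V] {G : SimpleGraph V} {W k : ℕ} {q : ℝ}

lemma exists_cluster (hG : G.Connected) (hq : 0 ≤ q) (hk : 0 < k)
    (hn : (Fintype.card V : ℝ) ≤ q ^ k) {A : Finset V} {v : V} (hv : v ∈ A) :
    ∃ R T Y : Finset V, v ∈ R ∧ R ⊆ A ∧ T ⊆ R ∧ (#R : ℝ) ≤ q * #T ∧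
      (∀ u ∈ T, ball G W u ⊆ Y) ∧ (∀ u ∈ A \ R, Disjoint (ball G W u) Y) ∧
      Y ⊆ nbhd G W A ∧ IsClusterOfRadius G (2 * k * W) Y := by
  obtain ⟨s, hsk, hs⟩ := exists_lt_succ_le_mul (a := fun i => (#(layer G W A v i) : ℝ)) hq hk
    (by simp [layer]) ((Nat.cast_le.2 (card_le_univ _)).trans hn)
  have hmono := monotone_layer (G := G) (W := W) hv
  refine ⟨layer G W A v (s + 1), layer G W A v s, nbhd G W (layer G W A v s),
    hmono (Nat.zero_le _) (mem_singleton_self v), layer_subset hv _, hmono s.le_succ, hs,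
    fun u hu => ball_subset_nbhd hu,
    fun u hu => disjoint_ball_nbhd_layer (mem_sdiff.1 hu).1 (mem_sdiff.1 hu).2,
    nbhd_mono (layer_subset hv s), (isClusterOfRadius_nbhd_layer hG hv s).mono ?_⟩
  nlinarith

lemma exists_phase (hG : G.Connected) (hq : 0 ≤ q) (hk : 0 < k)
    (hn : (Fintype.card V : ℝ) ≤ q ^ k) (A : Finset V) :
    ∃ (𝒞 : Finset (Finset V)) (T : Finset V), T ⊆ A ∧ (#A : ℝ) ≤ q * #T ∧
      (∀ Z ∈ 𝒞, IsClusterOfRadius G (2 * k * W) Z ∧ Z ⊆ nbhd G W A) ∧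
      (𝒞 : Set (Finset V)).PairwiseDisjoint id ∧ ∀ u ∈ T, ∃ Z ∈ 𝒞, ball G W u ⊆ Z := by
  induction A using Finset.strongInduction with
  | H A ih =>
  obtain rfl | ⟨v, hv⟩ := A.eq_empty_or_nonempty
  · exact ⟨∅, ∅, by simp⟩
  obtain ⟨R, T, Y, hvR, hRA, hTR, hRT, hTY, hdisj, hYA, hY⟩ :=
    exists_cluster (W := W) hG hq hk hn hv
  obtain ⟨𝒞, T', hT', hcard, h𝒞, hpw, hcov⟩ := ih (A \ R) (sdiff_ssubset hRA ⟨v, hvR⟩)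
  have hY𝒞 : ∀ Z ∈ 𝒞, Disjoint Y Z := fun Z hZ =>
    ((disjoint_biUnion_right _ _ _).2 fun u hu => (hdisj u hu).symm).mono_right (h𝒞 Z hZ).2
  refine ⟨insert Y 𝒞, T' ∪ T, union_subset (hT'.trans sdiff_subset) (hTR.trans hRA), ?_,
    forall_mem_insert _ _ _ |>.2 ⟨⟨hY, hYA⟩, fun Z hZ => ⟨(h𝒞 Z hZ).1,
      (h𝒞 Z hZ).2.trans (nbhd_mono sdiff_subset)⟩⟩, ?_, ?_⟩
  · have hsplit : #(A \ R) + #R = #A := card_sdiff_add_card_eq_card hRA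
    have hT'T : #(T' ∪ T) = #T' + #T :=
      card_union_of_disjoint (disjoint_sdiff_self_left.mono hT' hTR)
    rw [← hsplit, hT'T]
    push_cast
    linarith
  · rw [coe_insert]
    exact hpw.insert fun Z hZ _ => hY𝒞 Z hZ
  · simp only [mem_union, mem_insert, exists_eq_or_imp]
    rintro u (hu | hu)
    · exact Or.inr (hcov u hu)
    · exact Or.inl (hTY u hu)

lemma exists_cover (hG : G.Connected) (hq : 0 ≤ q) (hk : 0 < k)
    (hn : (Fintype.card V : ℝ) ≤ q ^ k) (M : Finset V) :
    ∃ 𝒞 : Finset (Finset V), (∀ Z ∈ 𝒞, IsClusterOfRadius G (2 * k * W) Z) ∧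
      (∀ u ∈ M, ∃ Z ∈ 𝒞, ball G W u ⊆ Z) ∧
      ∀ x, (#{Z ∈ 𝒞 | x ∈ Z} : ℝ) ≤ q * Real.log #M + 1 := by
  induction M using Finset.strongInduction with
  | H M ih =>
  obtain rfl | hM := M.eq_empty_or_nonempty
  · exact ⟨∅, by simp, by simp, by simp⟩
  obtain ⟨𝒞₁, T, hTM, hcard, h𝒞₁, hpw, hcov₁⟩ := exists_phase (W := W) hG hq hk hn M
  have hdeg₁ (x : V) : (#{Z ∈ 𝒞₁ | x ∈ Z} : ℝ) ≤ 1 := by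
    exact_mod_cast card_filter_mem_le_one hpw x
  obtain hD | hD := (M \ T).eq_empty_or_nonempty
  · refine ⟨𝒞₁, fun Z hZ => (h𝒞₁ Z hZ).1, fun u hu => hcov₁ u ?_, fun x => ?_⟩
    · exact sdiff_eq_empty_iff_subset.1 hD hu
    · have := mul_nonneg hq (Real.log_natCast_nonneg #M)
      linarith [hdeg₁ x]
  have hsplit : (#(M \ T) : ℝ) + #T = #M := by exact_mod_cast card_sdiff_add_card_eq_card hTM
  have hT : T.Nonempty := by
    rw [nonempty_iff_ne_empty]
    rintro rfl
    simp [hM.ne_empty] at hcard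
  obtain ⟨𝒞₂, h𝒞₂, hcov₂, hdeg₂⟩ := ih (M \ T) (sdiff_ssubset hTM hT)
  refine ⟨𝒞₁ ∪ 𝒞₂, ?_, fun u hu => ?_, fun x => ?_⟩
  · simp only [mem_union]
    rintro Z (hZ | hZ)
    exacts [(h𝒞₁ Z hZ).1, h𝒞₂ Z hZ]
  · by_cases huT : u ∈ T
    · obtain ⟨Z, hZ, hball⟩ := hcov₁ u huT
      exact ⟨Z, mem_union_left _ hZ, hball⟩
    · obtain ⟨Z, hZ, hball⟩ := hcov₂ u (mem_sdiff.2 ⟨hu, huT⟩)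
      exact ⟨Z, mem_union_right _ hZ, hball⟩
  · have hphases := one_le_mul_log_sub_log (q := q) (Nat.cast_pos.2 (card_pos.2 hD))
      (Nat.cast_le.2 (card_le_card sdiff_subset))
      (by rwa [show (#M : ℝ) - #(M \ T) = #T by linarith])
    calc (#{Z ∈ 𝒞₁ ∪ 𝒞₂ | x ∈ Z} : ℝ) ≤ #{Z ∈ 𝒞₁ | x ∈ Z} + #{Z ∈ 𝒞₂ | x ∈ Z} := by
          rw [filter_union]; exact_mod_cast card_union_le _ _
      _ ≤ 1 + (q * Real.log #(M \ T) + 1) := add_le_add (hdeg₁ x) (hdeg₂ x)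
      _ ≤ q * Real.log #M + 1 := by linarith

end Phases

lemma ncard_setOf_mem_equivFin_symm {α : Type*} [DecidableEq α] (𝒞 : Finset (Finset α))
    (x : α) :
    {i | x ∈ ((𝒞.equivFin.symm i : Finset α) : Set α)}.ncard = #{Z ∈ 𝒞 | x ∈ Z} := by
  refine (Set.ncard_congr (fun i _ => (𝒞.equivFin.symm i : Finset α)) (fun i hi => ?_)
    (fun i j _ _ h => 𝒞.equivFin.symm.injective (Subtype.ext h)) (fun Z hZ => ?_)).trans
    (Set.ncard_coe_finset _)
  · simpa using hi
  · obtain ⟨hZ, hx⟩ := mem_filter.1 hZ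
    exact ⟨𝒞.equivFin ⟨Z, hZ⟩, by simpa using hx, by simp⟩

end SparseCover

/-- **Sparse neighborhood covers exist.** There is a universal `C > 0` such that every
connected graph `G` on `n ≥ 2` vertices and all positive integers `k`, `W` admit a finite
collection `S 0, …, S (N-1)` of vertex subsets with: (1) each `S i` induces a connected
subgraph of diameter at most `C·k·W`; (2) each vertex belongs to at most `C·k·n^{1/k}·log n`
of the subsets; (3) for each vertex `v` some `S i` contains the whole ball of radius `W`
around `v`. -/
theorem sparse_neighborhood_cover_exists :
    ∃ C : ℝ, 0 < C ∧
      ∀ (V : Type) [Fintype V] (G : SimpleGraph V), G.Connected →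
        2 ≤ Fintype.card V →
        ∀ k W : ℕ, 1 ≤ k → 1 ≤ W →
        ∃ (N : ℕ) (S : Fin N → Set V),
          (∀ i, (G.induce (S i)).Connected ∧
            ∀ u v : S i, (((G.induce (S i)).dist u v : ℝ)) ≤ C * k * W) ∧
          (∀ v : V, (({i | v ∈ S i}.ncard : ℝ)) ≤
            C * k * (Fintype.card V : ℝ) ^ ((1 : ℝ) / k) * Real.log (Fintype.card V)) ∧
          (∀ v : V, ∃ i, ∀ u : V, G.dist v u ≤ W → u ∈ S i) := by
  refine ⟨4, by norm_num, fun V _ G hG hn k W hk _ => ?_⟩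
  classical
  set q : ℝ := (Fintype.card V : ℝ) ^ ((1 : ℝ) / k) with hq_def
  have hq : 1 ≤ q := Real.one_le_rpow (by exact_mod_cast one_le_two.trans hn) (by positivity)
  have hqk : q ^ k = Fintype.card V := by
    rw [hq_def, one_div]; exact Real.rpow_inv_natCast_pow (by positivity) (by omega)
  obtain ⟨𝒞, hcl, hcov, hdeg⟩ :=
    SparseCover.exists_cover (W := W) hG (zero_le_one.trans hq) hk hqk.ge Finset.univ
  refine ⟨𝒞.card, fun i => ((𝒞.equivFin.symm i : Finset V) : Set V), fun i => ?_, fun v => ?_,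
    fun v => ?_⟩
  · obtain ⟨hconn, hdiam⟩ := (hcl _ (𝒞.equivFin.symm i).2).induce_connected_and_dist_le
    refine ⟨hconn, fun u v => ?_⟩
    calc _ ≤ ((2 * (2 * k * W) : ℕ) : ℝ) := by exact_mod_cast hdiam u v
      _ = 4 * k * W := by push_cast; ring
  · have hlog : 1 / 2 < Real.log (Fintype.card V) := by
      have := Real.log_le_log two_pos (show (2 : ℝ) ≤ Fintype.card V by exact_mod_cast hn)
      linarith [Real.log_two_gt_d9]
    have hkR : (1 : ℝ) ≤ k := by exact_mod_cast hk
    rw [SparseCover.ncard_setOf_mem_equivFin_symm]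
    calc _ ≤ q * Real.log (Finset.univ : Finset V).card + 1 := hdeg v
      _ ≤ 4 * k * q * Real.log (Fintype.card V) := by
        rw [Finset.card_univ]
        nlinarith [mul_le_mul_of_nonneg_right hkR (by positivity : (0 : ℝ) ≤ q * (1 / 2))]
  · obtain ⟨Z, hZ, hball⟩ := hcov v (Finset.mem_univ v)
    exact ⟨𝒞.equivFin ⟨Z, hZ⟩, fun u hu => by simpa using hball (SparseCover.mem_ball.2 hu)⟩
end

section
/- There is a universal constant C > 0 such that the following holds. Let G be a finite simple graph on n ≥ 2 vertices, let ε ∈ (0, 1], and set κ = ⌈1/ε⌉. Then there exist: nested vertex subsets V(G) = V_0 ⊇ V_1 ⊇ ⋯ ⊇ V_κ = ∅; for each 0 ≤ i ≤ κ−1 a partition 𝒞_i of V_i into nonempty clusters; sets L_i = V_{i−1} \ V_i for 1 ≤ i ≤ κ; and edge sets F_i ⊆ E(G) for 1 ≤ i ≤ κ; such that: (a) for every 0 ≤ i ≤ κ−1, every cluster A ∈ 𝒞_i has strong radius at most i, i.e., the induced subgraph G[A] is connected and contains a vertex x with dist_{G[A]}(x, u) ≤ i for all u ∈ A; (b) for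 every 1 ≤ i ≤ κ and every v ∈ L_i, at most C·n^{ε}·log n edges of F_i are incident to v, each such edge joins v to a vertex of a cluster of 𝒞_{i−1} with distinct edges going to distinct clusters, and for every cluster of 𝒞_{i−1} that contains a neighbor of v there is at least one edge of F_i from v into that cluster; and (c) for every edge {u, v} ∈ E(G) with u ∈ L_i, v ∈ L_j and i ≤ j, either some cluster of 𝒞_{i−1} contains both u and v, or there is an edge {u, w} ∈ F_i and a cluster of 𝒞_{i−1} containing both w and v. -/
/-!
A deterministic version of the Baswana–Sen clustering. Start from the singleton clustering of
`V` and let `n = |V|`, `D = n ^ ε (log n + 1)`. Given the level-`i` clustering `𝒞 i`, greedy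
set cover picks at most `#𝒞 i / n ^ ε` clusters that are adjacent to every vertex seeing at least
`D` clusters of `𝒞 i`; these clusters are kept and every other vertex adjacent to one of them
joins it, which raises the strong radius by one. Hence `#𝒞 i ≤ n ^ (1 - i ε)`, a vertex dropped
at level `i + 1` sees fewer than `D` clusters of `𝒞 i`, and the last level `κ - 1 = ⌈1/ε⌉ - 1`
has at most `n ^ ε` clusters, so it can be dropped entirely. `F i` joins each vertex of `L i` to
one vertex of each cluster of `𝒞 (i - 1)` it is adjacent to.
-/

open Set

lemma Real.log_natCast_le_log_natCast {m n : ℕ} (h : m ≤ n) : Real.log m ≤ Real.log n := by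
  rcases m.eq_zero_or_pos with rfl | hm
  · simpa using Real.log_natCast_nonneg n
  · exact Real.log_le_log (by exact_mod_cast hm) (by exact_mod_cast h)

lemma Real.log_le_log_sub_of_le_mul_one_sub {x y t : ℝ} (hx : 0 ≤ x) (hy : 0 < y)
    (h : y ≤ x * (1 - t)) : Real.log y ≤ Real.log x - t := by
  have hxt : y ≤ x * Real.exp (-t) :=
    h.trans (mul_le_mul_of_nonneg_left (by linarith [Real.add_one_le_exp (-t)]) hx)
  have hx0 : 0 < x := by
    by_contra! hx0
    nlinarith [Real.exp_pos (-t), le_antisymm hx0 hx]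
  rw [Real.log_le_iff_le_exp hy, Real.exp_sub, Real.exp_log hx0, div_eq_mul_inv, ← Real.exp_neg]
  exact hxt

namespace Finset

variable {α β : Type*} {S : Finset β} {R : α → β → Prop} [∀ a b, Decidable (R a b)] {D : ℝ}

lemma exists_mul_card_le_mul_card_filter {W : Finset α} (hS : S.Nonempty)
    (hW : ∀ a ∈ W, D ≤ (S.filter (R a)).card) :
    ∃ b ∈ S, D * W.card ≤ S.card * (W.filter (R · b)).card := by
  refine exists_le_of_sum_le hS ?_
  have hcount := sum_card_bipartiteAbove_eq_sum_card_bipartiteBelow (s := W) (t := S) (r := R)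
  simp only [bipartiteAbove, bipartiteBelow] at hcount
  calc ∑ _b ∈ S, D * W.card = S.card * ∑ _a ∈ W, D := by simp [mul_comm]
    _ ≤ S.card * ∑ a ∈ W, ((S.filter (R a)).card : ℝ) := by gcongr with a ha; exact hW a ha
    _ = ∑ b ∈ S, (S.card : ℝ) * (W.filter (R · b)).card := by
      rw [← mul_sum]; exact_mod_cast congrArg (fun k : ℕ => (S.card : ℝ) * k) hcount

/-- The greedy set cover bound. -/
theorem exists_cover_card_mul_le [DecidableEq β] (hD : 0 < D) (W : Finset α)
    (hW : ∀ a ∈ W, D ≤ (S.filter (R a)).card) :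
    ∃ T ⊆ S, T.card * D ≤ S.card * (Real.log W.card + 1) ∧ ∀ a ∈ W, ∃ b ∈ T, R a b := by
  induction W using Finset.strongInduction with
  | _ W ih =>
  rcases W.eq_empty_or_nonempty with rfl | ⟨a₀, ha₀⟩
  · exact ⟨∅, empty_subset _, by simp, by simp⟩
  have hDS : D ≤ S.card := (hW a₀ ha₀).trans (by exact_mod_cast card_filter_le _ _)
  have hS : (0 : ℝ) < S.card := hD.trans_le hDS
  obtain ⟨b₀, hb₀, hb₀W⟩ :=
    exists_mul_card_le_mul_card_filter (card_pos.1 (by exact_mod_cast hS)) hW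
  set W' := W.filter (¬ R · b₀)
  have hW' : (W'.card : ℝ) = W.card - (W.filter (R · b₀)).card := by
    rw [eq_sub_iff_add_eq, add_comm]; exact_mod_cast card_filter_add_card_filter_not _
  have hlogW : 0 ≤ Real.log W.card := Real.log_natCast_nonneg _
  obtain ⟨T, hTS, hT, hcov⟩ : ∃ T ⊆ S, T.card * D + D ≤ S.card * (Real.log W.card + 1) ∧
      ∀ a ∈ W', ∃ b ∈ T, R a b := by
    rcases W'.eq_empty_or_nonempty with hW'e | hW'ne
    · exact ⟨∅, empty_subset _, by simp; nlinarith, by simp [hW'e]⟩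
    have hsub : W' ⊂ W := by
      have hpos : 0 < (W.filter (R · b₀)).card := by
        have : (0 : ℝ) < W.card := by exact_mod_cast card_pos.2 ⟨a₀, ha₀⟩
        exact_mod_cast pos_of_mul_pos_right (hb₀W.trans_lt' (by positivity)) hS.le
      obtain ⟨a, ha⟩ := card_pos.1 hpos
      exact filter_ssubset.2 ⟨a, (mem_filter.1 ha).1, not_not.2 (mem_filter.1 ha).2⟩
    obtain ⟨T, hTS, hT, hcov⟩ := ih W' hsub fun a ha => hW a (mem_filter.1 ha).1
    refine ⟨T, hTS, ?_, hcov⟩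
    -- removing the elements related to `b₀` shrinks `W` by a factor `1 - D / #S`
    have hlog : Real.log W'.card ≤ Real.log W.card - D / S.card := by
      refine Real.log_le_log_sub_of_le_mul_one_sub (Nat.cast_nonneg _)
        (by exact_mod_cast hW'ne.card_pos) ?_
      have : (W.card : ℝ) * (D / S.card) ≤ (W.filter (R · b₀)).card := by
        rw [mul_div_assoc', div_le_iff₀ hS]; linarith
      rw [hW', mul_one_sub]; linarith
    have := mul_le_mul_of_nonneg_left hlog (Nat.cast_nonneg S.card)
    rw [mul_sub, mul_div_cancel₀ _ hS.ne'] at this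
    nlinarith
  refine ⟨insert b₀ T, insert_subset hb₀ hTS, ?_, fun a ha => ?_⟩
  · calc ((insert b₀ T).card : ℝ) * D ≤ (T.card + 1) * D := by
          gcongr; exact_mod_cast card_insert_le _ _
      _ ≤ _ := by linarith
  · by_cases hab : R a b₀
    · exact ⟨b₀, mem_insert_self _ _, hab⟩
    · obtain ⟨b, hb, hR⟩ := hcov a (mem_filter.2 ⟨ha, hab⟩)
      exact ⟨b, mem_insert_of_mem hb, hR⟩

end Finset

namespace SimpleGraph

variable {V : Type*} (G : SimpleGraph V)

def StrongRadiusLE (A : Set V) (r : ℕ) : Prop :=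
  (G.induce A).Connected ∧ ∃ x : A, ∀ u : A, (G.induce A).dist x u ≤ r

variable {G}

lemma strongRadiusLE_singleton (v : V) : G.StrongRadiusLE {v} 0 := by
  have : Nonempty ({v} : Set V) := ⟨⟨v, rfl⟩⟩
  refine ⟨(connected_iff_exists_forall_reachable _).2 ⟨⟨v, rfl⟩, fun u => ?_⟩, ⟨v, rfl⟩,
    fun u => ?_⟩
  · rw [Subsingleton.elim u ⟨v, rfl⟩]
  · rw [Subsingleton.elim u ⟨v, rfl⟩, dist_self]

lemma StrongRadiusLE.union {A X : Set V} {r : ℕ} (hA : G.StrongRadiusLE A r)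
    (hX : ∀ v ∈ X, ∃ u ∈ A, G.Adj v u) : G.StrongRadiusLE (A ∪ X) (r + 1) := by
  obtain ⟨hconn, x, hx⟩ := hA
  let ι := G.induceHomOfLE (subset_union_left : A ⊆ A ∪ X)
  have walk_of_mem : ∀ u (hu : u ∈ A),
      ∃ p : (G.induce (A ∪ X)).Walk (ι x) ⟨u, mem_union_left X hu⟩, p.length ≤ r := by
    intro u hu
    obtain ⟨p, hp⟩ := hconn.exists_walk_length_eq_dist x ⟨u, hu⟩
    exact ⟨p.map ι.toHom, (Walk.length_map _ _).trans_le (hp ▸ hx _)⟩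
  have walk : ∀ u : ↥(A ∪ X), ∃ p : (G.induce (A ∪ X)).Walk (ι x) u, p.length ≤ r + 1 := by
    rintro ⟨u, hu | hu⟩
    · obtain ⟨p, hp⟩ := walk_of_mem u hu
      exact ⟨p, by omega⟩
    · obtain ⟨w, hw, hadj⟩ := hX u hu
      obtain ⟨p, hp⟩ := walk_of_mem w hw
      have hadj' : (G.induce (A ∪ X)).Adj ⟨w, mem_union_left X hw⟩ ⟨u, mem_union_right A hu⟩ :=
        hadj.symm
      exact ⟨p.concat hadj', by rw [Walk.length_concat]; omega⟩
  refine ⟨(connected_iff_exists_forall_reachable _).2 ⟨ι x, fun u => ?_⟩, ι x, fun u => ?_⟩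
  · obtain ⟨p, -⟩ := walk u
    exact p.reachable
  · obtain ⟨p, hp⟩ := walk u
    exact (dist_le p).trans hp

variable (G) in
structure IsClustering (r : ℕ) (P : Set (Set V)) : Prop where
  nonempty : ∀ A ∈ P, A.Nonempty
  pairwiseDisjoint : P.PairwiseDisjoint id
  strongRadiusLE : ∀ A ∈ P, G.StrongRadiusLE A r

lemma isClustering_empty (r : ℕ) : G.IsClustering r ∅ :=
  ⟨by simp, pairwiseDisjoint_empty, by simp⟩

lemma isClustering_range_singleton : G.IsClustering 0 (range ({·} : V → Set V)) :=
  ⟨by simp, pairwiseDisjoint_range_singleton, by simpa using strongRadiusLE_singleton⟩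

lemma IsClustering.subset {r : ℕ} {P Q : Set (Set V)} (hP : G.IsClustering r P) (hQ : Q ⊆ P) :
    G.IsClustering r Q :=
  ⟨fun A hA => hP.nonempty A (hQ hA), hP.pairwiseDisjoint.subset hQ,
    fun A hA => hP.strongRadiusLE A (hQ hA)⟩

/-- Each vertex of `X` joins one cluster of `T` it is adjacent to. -/
lemma exists_isClustering_succ_of_attach {T : Set (Set V)} (hT : T.Finite) {X : Set V}
    (hX : ∀ v ∈ X, ∃ A ∈ T, ∃ u ∈ A, G.Adj v u) (hXT : Disjoint X (⋃₀ T)) :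
    ∃ P : Set (Set V), ⋃₀ P = ⋃₀ T ∪ X ∧ P.ncard ≤ T.ncard ∧
      ∀ r, G.IsClustering r T → G.IsClustering (r + 1) P := by
  choose! att hattT hatt using hX
  let grow : Set V → Set V := fun A => A ∪ {v ∈ X | att v = A}
  have hgrow : ∀ A, ∀ v ∈ {v ∈ X | att v = A}, ∃ u ∈ A, G.Adj v u := by
    rintro A v ⟨hv, rfl⟩
    exact hatt v hv
  refine ⟨grow '' T, ?_, ncard_image_le hT, fun r hTr => ⟨?_, ?_, ?_⟩⟩
  · ext v
    simp only [sUnion_image, mem_iUnion, mem_union, mem_sUnion, grow]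
    constructor
    · rintro ⟨A, hA, hvA | ⟨hv, -⟩⟩
      exacts [Or.inl ⟨A, hA, hvA⟩, Or.inr hv]
    · rintro (⟨A, hA, hvA⟩ | hv)
      exacts [⟨A, hA, Or.inl hvA⟩, ⟨att v, hattT v hv, Or.inr ⟨hv, rfl⟩⟩]
  · rintro _ ⟨A, hA, rfl⟩
    exact (hTr.nonempty A hA).mono subset_union_left
  · rintro _ ⟨A, hA, rfl⟩ _ ⟨B, hB, rfl⟩ hne
    have hAB : A ≠ B := by rintro rfl; exact hne rfl
    have hXT' : ∀ D, ∀ C ∈ T, Disjoint {v ∈ X | att v = D} C := fun D C hC =>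
      (hXT.mono_left (sep_subset _ _)).mono_right (subset_sUnion_of_mem hC)
    refine disjoint_union_left.2 ⟨disjoint_union_right.2 ⟨hTr.pairwiseDisjoint hA hB hAB, ?_⟩,
      disjoint_union_right.2 ⟨hXT' A B hB, ?_⟩⟩
    · exact (hXT' B A hA).symm
    · exact Set.disjoint_left.2 fun v hvA hvB => hAB (hvA.2.symm.trans hvB.2)
  · rintro _ ⟨A, hA, rfl⟩
    exact (hTr.strongRadiusLE A hA).union (hgrow A)

variable (G) in
def adjacentClusters (P : Set (Set V)) (v : V) : Set (Set V) :=
  {A ∈ P | ∃ u ∈ A, G.Adj v u}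

lemma exists_isClustering_succ [Fintype V] {q : ℝ} (hq : 0 < q) (P : Set (Set V)) :
    ∃ P' : Set (Set V), ⋃₀ P' ⊆ ⋃₀ P ∧ P'.ncard * q ≤ P.ncard ∧
      (∀ v ∈ ⋃₀ P \ ⋃₀ P',
        ((G.adjacentClusters P v).ncard : ℝ) < q * (Real.log (Fintype.card V) + 1)) ∧
      ∀ r, G.IsClustering r P → G.IsClustering (r + 1) P' := by
  classical
  have hlog : 0 ≤ Real.log (Fintype.card V) := Real.log_natCast_nonneg _
  set D := q * (Real.log (Fintype.card V) + 1)
  have hD : 0 < D := by positivity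
  let S := P.toFinset
  have hadj : ∀ v, G.adjacentClusters P v = ↑(S.filter fun A => ∃ u ∈ A, G.Adj v u) := by
    intro v; ext A; simp [adjacentClusters, S]
  set W := Finset.univ.filter fun v => D ≤ (G.adjacentClusters P v).ncard
  obtain ⟨T, hTS, hTcard, hTcov⟩ :=
    Finset.exists_cover_card_mul_le (S := S) (R := fun v A => ∃ u ∈ A, G.Adj v u) hD W
      fun v hv => by rw [← ncard_coe_finset, ← hadj]; exact (Finset.mem_filter.1 hv).2
  have hTP : (T : Set (Set V)) ⊆ P := fun A hA => by simpa [S] using hTS hA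
  let X := {v ∈ ⋃₀ P \ ⋃₀ (T : Set (Set V)) | ∃ A ∈ (T : Set (Set V)), ∃ u ∈ A, G.Adj v u}
  obtain ⟨P', hP'X, hP'card, hP'cl⟩ := exists_isClustering_succ_of_attach T.finite_toSet
    (X := X) (fun v hv => hv.2) (Set.disjoint_left.2 fun v hv => hv.1.2)
  refine ⟨P', ?_, ?_, ?_, fun r hr => hP'cl r (hr.subset hTP)⟩
  · rw [hP'X]
    exact union_subset (sUnion_mono hTP) fun v hv => hv.1.1
  · have hW : Real.log W.card ≤ Real.log (Fintype.card V) :=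
      Real.log_natCast_le_log_natCast (Finset.card_le_univ W)
    have hSP : S.card = P.ncard := (ncard_eq_toFinset_card' P).symm
    have : (P'.ncard : ℝ) * D ≤ P.ncard * (Real.log (Fintype.card V) + 1) :=
      calc (P'.ncard : ℝ) * D ≤ T.card * D := by
            gcongr; simpa using hP'card
        _ ≤ S.card * (Real.log W.card + 1) := hTcard
        _ ≤ P.ncard * (Real.log (Fintype.card V) + 1) := by rw [hSP]; gcongr
    rw [← mul_assoc] at this
    exact le_of_mul_le_mul_right this (by positivity)
  · rintro v ⟨hvP, hvP'⟩
    by_contra! hv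
    obtain ⟨A, hAT, u, huA, hvu⟩ := hTcov v (by simpa [W] using hv)
    apply hvP'
    rw [hP'X]
    by_cases hvT : v ∈ ⋃₀ (T : Set (Set V))
    · exact Or.inl hvT
    · exact Or.inr ⟨⟨hvP, hvT⟩, A, hAT, u, huA, hvu⟩

variable (G) in
def linkEdges (L : Set V) (𝒞 : Set (Set V)) : Set (V × V) :=
  {(v, w) : V × V | v ∈ L ∧ ∃ A ∈ 𝒞, ∃ h : ∃ u ∈ A, G.Adj v u, w = h.choose}

section linkEdges

variable {L : Set V} {𝒞 : Set (Set V)} {A : Set V} {u v w w' : V}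

lemma mem_and_adj_of_mem_linkEdges (h : (v, w) ∈ G.linkEdges L 𝒞) : v ∈ L ∧ G.Adj v w := by
  obtain ⟨hv, A, -, h, rfl⟩ := h
  exact ⟨hv, h.choose_spec.2⟩

lemma exists_mem_of_mem_linkEdges (h : (v, w) ∈ G.linkEdges L 𝒞) : ∃ A ∈ 𝒞, w ∈ A := by
  obtain ⟨-, A, hA, h, rfl⟩ := h
  exact ⟨A, hA, h.choose_spec.1⟩

lemma eq_of_mem_linkEdges (h𝒞 : 𝒞.PairwiseDisjoint id) (hw : (v, w) ∈ G.linkEdges L 𝒞)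
    (hw' : (v, w') ∈ G.linkEdges L 𝒞) (hA : A ∈ 𝒞) (hwA : w ∈ A) (hw'A : w' ∈ A) : w = w' := by
  obtain ⟨-, B, hB, h, rfl⟩ := hw
  obtain ⟨-, B', hB', h', rfl⟩ := hw'
  obtain rfl := h𝒞.elim hB hA (not_disjoint_iff.2 ⟨_, h.choose_spec.1, hwA⟩)
  obtain rfl := h𝒞.elim hB' hA (not_disjoint_iff.2 ⟨_, h'.choose_spec.1, hw'A⟩)
  rfl

lemma exists_mem_linkEdges (hv : v ∈ L) (hA : A ∈ 𝒞) (hvA : ∃ u ∈ A, G.Adj v u) :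
    ∃ w ∈ A, (v, w) ∈ G.linkEdges L 𝒞 :=
  ⟨hvA.choose, hvA.choose_spec.1, hv, A, hA, hvA, rfl⟩

lemma exists_linkEdges_of_adj (hu : u ∈ L) (hv : v ∈ ⋃₀ 𝒞) (huv : G.Adj u v) :
    ∃ w, (u, w) ∈ G.linkEdges L 𝒞 ∧ ∃ A ∈ 𝒞, w ∈ A ∧ v ∈ A := by
  obtain ⟨A, hA, hvA⟩ := hv
  obtain ⟨w, hwA, hw⟩ := exists_mem_linkEdges hu hA ⟨v, hvA, huv⟩
  exact ⟨w, hw, A, hA, hwA, hvA⟩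

lemma ncard_linkEdges_le [Finite V] (v : V) :
    {w | (v, w) ∈ G.linkEdges L 𝒞}.ncard ≤ (G.adjacentClusters 𝒞 v).ncard := by
  classical
  let pick : Set V → V := fun A => if h : ∃ u ∈ A, G.Adj v u then h.choose else v
  refine (ncard_le_ncard (t := pick '' G.adjacentClusters 𝒞 v) ?_).trans
    (ncard_image_le (toFinite _))
  rintro w ⟨-, A, hA, h, rfl⟩
  exact ⟨A, ⟨hA, h⟩, dif_pos h⟩

end linkEdges

variable [Fintype V]

variable (G) in
lemma exists_clustering_chain {q : ℝ} (hq : 0 < q) :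
    ∃ 𝒞 : ℕ → Set (Set V), ⋃₀ 𝒞 0 = univ ∧ (∀ i, ⋃₀ 𝒞 (i + 1) ⊆ ⋃₀ 𝒞 i) ∧
      (∀ i, G.IsClustering i (𝒞 i)) ∧ (∀ i, (𝒞 i).ncard * q ^ i ≤ Fintype.card V) ∧
      ∀ i, ∀ v ∈ ⋃₀ 𝒞 i \ ⋃₀ 𝒞 (i + 1),
        ((G.adjacentClusters (𝒞 i) v).ncard : ℝ) < q * (Real.log (Fintype.card V) + 1) := by
  choose next hsub hcard hadj hcl using exists_isClustering_succ (G := G) hq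
  let 𝒞 : ℕ → Set (Set V) := fun i => next^[i] (range ({·} : V → Set V))
  have h𝒞 : ∀ i, 𝒞 (i + 1) = next (𝒞 i) := fun i => Function.iterate_succ_apply' _ _ _
  refine ⟨𝒞, by simp [𝒞, iUnion_of_singleton], fun i => h𝒞 i ▸ hsub _, fun i => ?_, fun i => ?_,
    fun i => h𝒞 i ▸ hadj _⟩
  · induction i with
    | zero => exact isClustering_range_singleton
    | succ i ih => exact h𝒞 i ▸ hcl _ i ih
  · induction i with
    | zero => simp [𝒞, ncard_range_of_injective singleton_injective]
    | succ i ih =>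
      calc _ = (next (𝒞 i)).ncard * q * q ^ i := by rw [h𝒞]; ring
        _ ≤ (𝒞 i).ncard * q ^ i := by gcongr; exact hcard _
        _ ≤ Fintype.card V := ih

variable (G) in
lemma exists_clustering_chain_of_le_pow {q : ℝ} (hq : 0 < q) {κ : ℕ} (hκ : 0 < κ)
    (hqκ : (Fintype.card V : ℝ) ≤ q ^ κ) :
    ∃ 𝒞 : ℕ → Set (Set V), ⋃₀ 𝒞 0 = univ ∧ ⋃₀ 𝒞 κ = ∅ ∧ (∀ i, ⋃₀ 𝒞 (i + 1) ⊆ ⋃₀ 𝒞 i) ∧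
      (∀ i, G.IsClustering i (𝒞 i)) ∧
      ∀ i, ∀ v ∈ ⋃₀ 𝒞 i \ ⋃₀ 𝒞 (i + 1),
        ((G.adjacentClusters (𝒞 i) v).ncard : ℝ) ≤ q * (Real.log (Fintype.card V) + 1) := by
  obtain ⟨𝒞, h0, hsub, hcl, hcard, hadj⟩ := exists_clustering_chain G hq
  refine ⟨fun i => if i < κ then 𝒞 i else ∅, by simpa [hκ] using h0, by simp, fun i => ?_,
    fun i => ?_, fun i v hv => ?_⟩
  · by_cases hi : i + 1 < κ
    · simpa [hi, (by omega : i < κ)] using hsub i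
    · simp [hi]
  · dsimp only
    split_ifs
    exacts [hcl i, isClustering_empty i]
  have hiκ : i < κ := by
    by_contra hi
    simp [hi] at hv
  by_cases hi : i + 1 < κ
  · simp only [hi, hiκ, if_true] at hv ⊢
    exact (hadj i v hv).le
  simp only [hiκ, if_true]
  -- the last level has at most `q` clusters, since `#𝒞 i * q ^ i ≤ n ≤ q ^ (i + 1)`
  have hlast : ((𝒞 i).ncard : ℝ) ≤ q := by
    have := (hcard i).trans (((by omega : κ = i + 1)) ▸ hqκ)
    rw [pow_succ, mul_comm (q ^ i)] at this
    exact le_of_mul_le_mul_right this (pow_pos hq i)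
  calc _ ≤ ((𝒞 i).ncard : ℝ) := by exact_mod_cast ncard_le_ncard (sep_subset _ _)
    _ ≤ q := hlast
    _ ≤ q * (Real.log (Fintype.card V) + 1) :=
      le_mul_of_one_le_right hq.le (by linarith [Real.log_natCast_nonneg (Fintype.card V)])

end SimpleGraph

lemma Real.mul_log_add_one_le_three_mul_mul_log {q : ℝ} (hq : 0 ≤ q) {n : ℕ} (hn : 2 ≤ n) :
    q * (Real.log n + 1) ≤ 3 * q * Real.log n := by
  have : 1 / 2 ≤ Real.log n :=
    le_trans (by linarith [Real.log_two_gt_d9]) (Real.log_le_log two_pos (by exact_mod_cast hn))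
  nlinarith

lemma Real.self_le_rpow_pow_natCeil_one_div {x ε : ℝ} (hx : 1 ≤ x) (hε : 0 < ε) :
    x ≤ (x ^ ε) ^ ⌈1 / ε⌉₊ := by
  rw [← Real.rpow_mul_natCast (by linarith)]
  conv_lhs => rw [← Real.rpow_one x]
  exact Real.rpow_le_rpow_of_exponent_le hx ((div_le_iff₀' hε).1 (Nat.le_ceil _))

open SimpleGraph in
/-- **Baswana–Sen cluster hierarchy exists.** There is a universal constant `C > 0` such that
for every finite simple graph `G` on `n ≥ 2` vertices and every `ε ∈ (0,1]`, setting
`κ = ⌈1/ε⌉`, there exist nested vertex sets `V = Vs 0 ⊇ Vs 1 ⊇ ⋯ ⊇ Vs κ = ∅`, for each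
`0 ≤ i ≤ κ-1` a partition `𝒞 i` of `Vs i` into nonempty clusters, level sets
`L i = Vs (i-1) \ Vs i`, and inter-cluster communication edge sets `F i` (oriented from the
`L i` endpoint), satisfying properties (a) strong radius `≤ i` of clusters of `𝒞 i`,
(b) each `v ∈ L i` has at most `C·n^ε·log n` incident edges in `F i`, each going into a
cluster of `𝒞 (i-1)`, distinct edges into distinct clusters, and at least one edge into every
cluster of `𝒞 (i-1)` containing a neighbor of `v`, and (c) for every edge `{u,v}` with
`u ∈ L i`, `v ∈ L j`, `i ≤ j`, either some cluster of `𝒞 (i-1)` contains both `u` and `v`, or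
some edge `(u,w) ∈ F i` has `w` in a cluster of `𝒞 (i-1)` containing `v`. -/
theorem baswana_sen_hierarchy_exists :
    ∃ C : ℝ, 0 < C ∧
      ∀ (V : Type) [Fintype V] (G : SimpleGraph V) (ε : ℝ),
        0 < ε → ε ≤ 1 → 2 ≤ Fintype.card V →
        ∃ (κ : ℕ) (Vs : ℕ → Set V) (𝒞 : ℕ → Set (Set V)) (F : ℕ → Set (V × V)),
          κ = ⌈1 / ε⌉₊ ∧
          Vs 0 = Set.univ ∧ Vs κ = ∅ ∧
          (∀ i, i < κ → Vs (i + 1) ⊆ Vs i) ∧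
          -- `𝒞 i` is a partition of `Vs i` into nonempty clusters
          (∀ i, i < κ →
            (∀ A ∈ 𝒞 i, A.Nonempty) ∧
            (∀ A ∈ 𝒞 i, ∀ B ∈ 𝒞 i, A ≠ B → Disjoint A B) ∧
            ⋃₀ 𝒞 i = Vs i) ∧
          -- `F i` consists of edges of `G` oriented from their endpoint in `L i`
          (∀ i, 1 ≤ i → i ≤ κ → ∀ v w : V, (v, w) ∈ F i →
            v ∈ Vs (i - 1) \ Vs i ∧ G.Adj v w) ∧
          -- (a) strong radius at most `i`
          (∀ i, i < κ → ∀ A ∈ 𝒞 i, (G.induce A).Connected ∧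
            ∃ x : A, ∀ u : A, (G.induce A).dist x u ≤ i) ∧
          -- (b)
          (∀ i, 1 ≤ i → i ≤ κ → ∀ v ∈ Vs (i - 1) \ Vs i,
            (({w | (v, w) ∈ F i}.ncard : ℝ) ≤
              C * (Fintype.card V : ℝ) ^ ε * Real.log (Fintype.card V)) ∧
            (∀ w, (v, w) ∈ F i → ∃ A ∈ 𝒞 (i - 1), w ∈ A) ∧
            (∀ w w', (v, w) ∈ F i → (v, w') ∈ F i →
              (∃ A ∈ 𝒞 (i - 1), w ∈ A ∧ w' ∈ A) → w = w') ∧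
            (∀ A ∈ 𝒞 (i - 1), (∃ u ∈ A, G.Adj v u) → ∃ w ∈ A, (v, w) ∈ F i)) ∧
          -- (c)
          (∀ u v : V, G.Adj u v → ∀ i j, 1 ≤ i → i ≤ j → j ≤ κ →
            u ∈ Vs (i - 1) \ Vs i → v ∈ Vs (j - 1) \ Vs j →
            (∃ A ∈ 𝒞 (i - 1), u ∈ A ∧ v ∈ A) ∨
            (∃ w, (u, w) ∈ F i ∧ ∃ A ∈ 𝒞 (i - 1), w ∈ A ∧ v ∈ A)) := by
  refine ⟨3, by norm_num, fun V _ G ε hε _ hn => ?_⟩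
  have hn' : (1 : ℝ) ≤ Fintype.card V := by exact_mod_cast (by omega : 1 ≤ Fintype.card V)
  obtain ⟨𝒞, h𝒞0, h𝒞κ, h𝒞succ, h𝒞cl, h𝒞adj⟩ := exists_clustering_chain_of_le_pow G
    (Real.rpow_pos_of_pos (by linarith) ε) (Nat.ceil_pos.2 (by positivity))
    (Real.self_le_rpow_pow_natCeil_one_div hn' hε)
  have hVs : Antitone fun i => ⋃₀ 𝒞 i := antitone_nat_of_succ_le h𝒞succ
  refine ⟨_, fun i => ⋃₀ 𝒞 i, 𝒞, fun i => G.linkEdges (⋃₀ 𝒞 (i - 1) \ ⋃₀ 𝒞 i) (𝒞 (i - 1)),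
    rfl, h𝒞0, h𝒞κ, fun i _ => h𝒞succ i,
    fun i _ => ⟨(h𝒞cl i).nonempty, (h𝒞cl i).pairwiseDisjoint, rfl⟩,
    fun i _ _ v w h => mem_and_adj_of_mem_linkEdges h, fun i _ => (h𝒞cl i).strongRadiusLE,
    fun i hi _ v hv => ⟨?_, fun w h => exists_mem_of_mem_linkEdges h,
      fun w w' hw hw' ⟨A, hA, hwA, hw'A⟩ =>
        eq_of_mem_linkEdges (h𝒞cl _).pairwiseDisjoint hw hw' hA hwA hw'A,
      fun A hA hvA => exists_mem_linkEdges hv hA hvA⟩,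
    fun u v huv i j hi hij _ hu hv =>
      Or.inr (exists_linkEdges_of_adj hu (hVs (show i - 1 ≤ j - 1 by omega) hv.1) huv)⟩
  have hv' : v ∈ ⋃₀ 𝒞 (i - 1) \ ⋃₀ 𝒞 (i - 1 + 1) := Nat.sub_add_cancel hi ▸ hv
  calc _ ≤ ((G.adjacentClusters (𝒞 (i - 1)) v).ncard : ℝ) := by
        exact_mod_cast ncard_linkEdges_le v
    _ ≤ (Fintype.card V : ℝ) ^ ε * (Real.log (Fintype.card V) + 1) := h𝒞adj _ v hv'
    _ ≤ 3 * (Fintype.card V : ℝ) ^ ε * Real.log (Fintype.card V) :=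
        Real.mul_log_add_one_le_three_mul_mul_log (by positivity) hn
end

section
/- There is a universal constant C > 0 such that for every finite simple graph G on n ≥ 2 vertices and every integer κ ≥ 1, there exists a spanning subgraph H of G with at most C·κ·n^{1+1/κ}·log n edges such that for every edge {u, v} of G there is a walk in H from u to v of length at most 2κ − 1 (equivalently, H is a (2κ−1)-spanner of G: dist_H(u,v) ≤ (2κ−1)·dist_G(u,v) for all u, v in the same connected component of G). -/
/-!
Greedy cluster growing with `t = n ^ (1/κ)`. Pick a vertex `c` of the set `S` still to be
handled and grow balls about it inside `S`; since `n ≤ t ^ κ`, some radius `r < κ` has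
`|B(r+1)| ≤ t·|B(r)|`. A BFS tree of `B(r+1)` has fewer than `t·|B(r)|` edges, and every edge of
`G` from `S` into `B(r)` closes, through `c`, a walk of length `≤ (r+1) + r ≤ 2κ - 1` in it.
Removing `B(r)` from `S` and recursing charges at most `t` edges to every vertex, so the
spanner has at most `t·n = n^(1+1/κ)` edges; `C = 2` works because `1 ≤ 2κ·log n` for `n ≥ 2`.
-/

lemma exists_lt_le_mul_of_le_pow_mul {a : ℕ → ℝ} {t : ℝ} (ht : 0 ≤ t) {κ : ℕ} (hκ : 0 < κ)
    (h : a κ ≤ t ^ κ * a 0) : ∃ r < κ, a (r + 1) ≤ t * a r := by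
  by_contra! hgrow
  have key : ∀ k, 1 ≤ k → k ≤ κ → t ^ k * a 0 < a k := by
    intro k hk
    induction k, hk using Nat.le_induction with
    | base => intro _; simpa using hgrow 0 hκ
    | succ k _ ih =>
      intro hkκ
      calc t ^ (k + 1) * a 0 = t * (t ^ k * a 0) := by ring
        _ ≤ t * a k := mul_le_mul_of_nonneg_left (ih (by omega)).le ht
        _ < a (k + 1) := hgrow k (by omega)
  exact (key κ hκ le_rfl).not_ge h

namespace SimpleGraph

variable {V : Type*} (G : SimpleGraph V)

/-- When `c ∈ S`, this is the ball of radius `k` about `c` in `G.induce S`. -/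
def ballWithin (S : Set V) (c : V) : ℕ → Set V
  | 0 => {c}
  | k + 1 => ballWithin S c k ∪ {x ∈ S | ∃ y ∈ ballWithin S c k, G.Adj y x}

variable {G} {S : Set V} {c : V}

lemma ballWithin_subset (hc : c ∈ S) : ∀ k, G.ballWithin S c k ⊆ S
  | 0 => Set.singleton_subset_iff.2 hc
  | k + 1 => Set.union_subset (ballWithin_subset hc k) (Set.sep_subset _ _)

lemma ballWithin_monotone : Monotone (G.ballWithin S c) :=
  monotone_nat_of_le_succ fun _ => Set.subset_union_left

lemma center_mem_ballWithin (k : ℕ) : c ∈ G.ballWithin S c k :=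
  ballWithin_monotone k.zero_le rfl

lemma mem_ballWithin_succ_of_adj {x y : V} {k : ℕ} (hx : x ∈ S) (hy : y ∈ G.ballWithin S c k)
    (hadj : G.Adj y x) : x ∈ G.ballWithin S c (k + 1) :=
  Or.inr ⟨hx, y, hy, hadj⟩

lemma ncard_edgeSet_fromEdgeSet_image_le [Finite V] (f : V → V) (D : Set V) :
    (fromEdgeSet ((fun x => s(f x, x)) '' D)).edgeSet.ncard ≤ D.ncard :=
  calc _ ≤ ((fun x => s(f x, x)) '' D).ncard := by
        rw [edgeSet_fromEdgeSet]; exact Set.ncard_le_ncard Set.sdiff_subset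
    _ ≤ D.ncard := Set.ncard_image_le

lemma exists_bfsTree_ballWithin [Finite V] (k : ℕ) :
    ∃ T ≤ G, T.edgeSet.ncard < (G.ballWithin S c k).ncard ∧
      ∀ j ≤ k, ∀ x ∈ G.ballWithin S c j, ∃ p : T.Walk x c, p.length ≤ j := by
  induction k with
  | zero =>
    refine ⟨⊥, bot_le, by simp [ballWithin], fun j hj x hx => ?_⟩
    obtain rfl : j = 0 := Nat.le_zero.1 hj
    obtain rfl : x = c := hx
    exact ⟨.nil, le_rfl⟩
  | succ k ih =>
    obtain ⟨T, hTG, hTcard, hTwalk⟩ := ih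
    set D := G.ballWithin S c (k + 1) \ G.ballWithin S c k
    have hparent : ∀ x, ∃ y, x ∈ D → y ∈ G.ballWithin S c k ∧ G.Adj y x := by
      intro x
      by_cases hx : x ∈ D
      · obtain ⟨hx, hxk⟩ := hx
        obtain hx | ⟨-, y, hy, hadj⟩ := hx
        · exact absurd hx hxk
        · exact ⟨y, fun _ => ⟨hy, hadj⟩⟩
      · exact ⟨x, fun h => absurd h hx⟩
    choose parent hparent using hparent
    set Star := fromEdgeSet ((fun x => s(parent x, x)) '' D)
    refine ⟨T ⊔ Star, sup_le hTG ?_, ?_, ?_⟩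
    · rw [fromEdgeSet_le]
      rintro _ ⟨⟨x, hx, rfl⟩, -⟩
      exact (hparent x hx).2
    · have hD : D.ncard + (G.ballWithin S c k).ncard = (G.ballWithin S c (k + 1)).ncard :=
        Set.ncard_sdiff_add_ncard_of_subset (ballWithin_monotone k.le_succ)
      calc (T ⊔ Star).edgeSet.ncard ≤ T.edgeSet.ncard + Star.edgeSet.ncard := by
            rw [edgeSet_sup]; exact Set.ncard_union_le _ _
        _ < (G.ballWithin S c k).ncard + D.ncard := by
            have : Star.edgeSet.ncard ≤ D.ncard := ncard_edgeSet_fromEdgeSet_image_le parent D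
            omega
        _ = _ := by omega
    · intro j hj x hx
      rcases hj.lt_or_eq with hj | rfl
      · obtain ⟨p, hp⟩ := hTwalk j (by omega) x hx
        exact ⟨p.mapLe le_sup_left, by simpa using hp⟩
      by_cases hxk : x ∈ G.ballWithin S c k
      · obtain ⟨p, hp⟩ := hTwalk k le_rfl x hxk
        exact ⟨p.mapLe le_sup_left, by rw [Walk.length_mapLe]; omega⟩
      obtain ⟨hy, hadj⟩ := hparent x ⟨hx, hxk⟩
      obtain ⟨p, hp⟩ := hTwalk k le_rfl _ hy
      have hstar : (T ⊔ Star).Adj x (parent x) :=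
        Or.inr ((fromEdgeSet_adj _).2 ⟨⟨x, ⟨hx, hxk⟩, Sym2.eq_swap⟩, hadj.ne.symm⟩)
      exact ⟨.cons hstar (p.mapLe le_sup_left), by simpa using hp⟩

end SimpleGraph

theorem SimpleGraph.exists_spanner_on {V : Type*} [Finite V] (G : SimpleGraph V) {κ : ℕ}
    (hκ : 0 < κ) {t : ℝ} (ht : 0 ≤ t) (hn : (Nat.card V : ℝ) ≤ t ^ κ) (S : Set V) :
    ∃ H ≤ G, (H.edgeSet.ncard : ℝ) ≤ t * S.ncard ∧
      ∀ u ∈ S, ∀ v ∈ S, G.Adj u v → ∃ p : H.Walk u v, p.length ≤ 2 * κ - 1 := by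
  induction S using WellFoundedLT.induction with
  | _ S ih =>
  rcases S.eq_empty_or_nonempty with rfl | ⟨c, hc⟩
  · exact ⟨⊥, bot_le, by simp, fun u hu => absurd hu (Set.notMem_empty u)⟩
  obtain ⟨r, hrκ, hr⟩ := exists_lt_le_mul_of_le_pow_mul (a := fun k => (G.ballWithin S c k).ncard)
    ht hκ (by simpa [ballWithin] using hn.trans' (mod_cast Set.ncard_le_card _))
  obtain ⟨T, hTG, hTcard, hTwalk⟩ := exists_bfsTree_ballWithin (G := G) (S := S) (c := c) (r + 1)
  have hcore : G.ballWithin S c r ⊆ S := ballWithin_subset hc r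
  obtain ⟨H, hHG, hHcard, hHwalk⟩ := ih (S \ G.ballWithin S c r)
    (LE.le.sdiff_ssubset_of_nonempty hcore ⟨c, center_mem_ballWithin r⟩)
  refine ⟨H ⊔ T, sup_le hHG hTG, ?_, ?_⟩
  · have hsplit : ((S \ G.ballWithin S c r).ncard : ℝ) + (G.ballWithin S c r).ncard = S.ncard :=
      mod_cast Set.ncard_sdiff_add_ncard_of_subset hcore
    calc ((H ⊔ T).edgeSet.ncard : ℝ) ≤ H.edgeSet.ncard + T.edgeSet.ncard := by
          rw [edgeSet_sup]; exact mod_cast Set.ncard_union_le _ _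
      _ ≤ t * (S \ G.ballWithin S c r).ncard + t * (G.ballWithin S c r).ncard := by
          have : (T.edgeSet.ncard : ℝ) ≤ (G.ballWithin S c (r + 1)).ncard := mod_cast hTcard.le
          linarith
      _ = t * S.ncard := by rw [← mul_add, hsplit]
  · have hcross : ∀ a ∈ S, ∀ b ∈ G.ballWithin S c r, G.Adj a b →
        ∃ p : (H ⊔ T).Walk a b, p.length ≤ 2 * κ - 1 := by
      intro a ha b hb hab
      obtain ⟨pa, hpa⟩ := hTwalk (r + 1) le_rfl a (mem_ballWithin_succ_of_adj ha hb hab.symm)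
      obtain ⟨pb, hpb⟩ := hTwalk r r.le_succ b hb
      exact ⟨(pa.append pb.reverse).mapLe le_sup_right, by
        rw [Walk.length_mapLe, Walk.length_append, Walk.length_reverse]; omega⟩
    intro u hu v hv huv
    by_cases hvc : v ∈ G.ballWithin S c r
    · exact hcross u hu v hvc huv
    by_cases huc : u ∈ G.ballWithin S c r
    · obtain ⟨p, hp⟩ := hcross v hv u huc huv.symm
      exact ⟨p.reverse, by simpa using hp⟩
    obtain ⟨p, hp⟩ := hHwalk u ⟨hu, huc⟩ v ⟨hv, hvc⟩ huv
    exact ⟨p.mapLe le_sup_left, by simpa using hp⟩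

/-- **Baswana–Sen spanner guarantee.** There is a universal constant `C > 0` such that every
finite simple graph `G` on `n ≥ 2` vertices and every integer `κ ≥ 1` admit a spanning
subgraph `H ≤ G` with at most `C·κ·n^{1+1/κ}·log n` edges such that every edge `{u,v}` of `G`
is stretched to a walk in `H` of length at most `2κ - 1` (i.e. `H` is a `(2κ-1)`-spanner). -/
theorem baswana_sen_spanner_exists :
    ∃ C : ℝ, 0 < C ∧
      ∀ (V : Type) [Fintype V] (G : SimpleGraph V),
        2 ≤ Fintype.card V →
        ∀ κ : ℕ, 1 ≤ κ →
        ∃ H : SimpleGraph V, H ≤ G ∧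
          ((H.edgeSet.ncard : ℝ) ≤
            C * κ * (Fintype.card V : ℝ) ^ ((1 : ℝ) + 1 / κ) * Real.log (Fintype.card V)) ∧
          (∀ u v : V, G.Adj u v → ∃ p : H.Walk u v, p.length ≤ 2 * κ - 1) := by
  refine ⟨2, two_pos, fun V _ G hn κ hκ => ?_⟩
  have hn2 : (2 : ℝ) ≤ Fintype.card V := mod_cast hn
  set n : ℝ := (Fintype.card V : ℝ)
  have hκ1 : (1 : ℝ) ≤ κ := mod_cast hκ
  have hpow : (n ^ ((1 : ℝ) / κ)) ^ κ = n := by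
    rw [← Real.rpow_natCast, ← Real.rpow_mul (by positivity), one_div_mul_cancel (by positivity),
      Real.rpow_one]
  obtain ⟨H, hHG, hHcard, hHwalk⟩ := G.exists_spanner_on hκ (by positivity : 0 ≤ n ^ ((1 : ℝ) / κ))
    (by rw [hpow, Nat.card_eq_fintype_card]) Set.univ
  refine ⟨H, hHG, ?_, fun u v huv => hHwalk u trivial v trivial huv⟩
  have hlog : 1 ≤ 2 * κ * Real.log n := by
    have := Real.log_two_gt_d9
    have := Real.log_le_log two_pos hn2
    nlinarith
  calc (H.edgeSet.ncard : ℝ) ≤ n ^ ((1 : ℝ) / κ) * n := by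
        simpa [Set.ncard_univ, Nat.card_eq_fintype_card] using hHcard
    _ = n ^ ((1 : ℝ) + 1 / κ) := by rw [Real.rpow_add (by positivity), Real.rpow_one, mul_comm]
    _ ≤ 2 * κ * n ^ ((1 : ℝ) + 1 / κ) * Real.log n := by
        nlinarith [mul_le_mul_of_nonneg_left hlog (by positivity : 0 ≤ n ^ ((1 : ℝ) + 1 / κ))]
end

section
/- Let T be a finite tree on n ≥ 1 vertices with a designated root r, and let s ≥ 1 be an integer. Say that u is a descendant of v in (T, r) if v lies on the unique path in T from u to r. Then there exists a partition 𝒫 of V(T) into at most ⌊n/s⌋ + 1 parts such that: (i) each part B ∈ 𝒫 induces a connected subgraph of T; and (ii) for each part B ∈ 𝒫, letting b be the unique vertex of B at minimum distance from r, every vertex u ∈ B with u ≠ b has fewer than s descendants inside B (i.e., |{ w ∈ B : w is a descendant of u }| < s). -/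
/-!
Repeatedly cut off, together with its remaining descendants, a deepest vertex `u ≠ r` that still
has at least `s` descendants among the remaining vertices. Each piece cut off has at least `s`
vertices, so there are at most `n / s` of them, and since `u` was chosen deepest every proper
subtree of the piece has fewer than `s` vertices. What remains contains `r`, is closed under
taking ancestors, and has no heavy vertex besides `r`: it is the last part.
-/

open Finset Function SimpleGraph

lemma Set.pairwise_disjoint_fin_cons {α : Type*} {k : ℕ} {s : Set α} {t : Fin k → Set α}
    (hs : ∀ i, Disjoint s (t i)) (ht : Pairwise (Disjoint on t)) :
    Pairwise (Disjoint on (Fin.cons s t : Fin (k + 1) → Set α)) := by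
  intro i j hij
  induction i using Fin.cases <;> induction j using Fin.cases
  · exact absurd rfl hij
  · exact hs _
  · exact (hs _).symm
  · exact ht (fun h => hij (congrArg Fin.succ h))

lemma Set.iUnion_fin_cons {α : Type*} {k : ℕ} (s : Set α) (t : Fin k → Set α) :
    ⋃ i, (Fin.cons s t : Fin (k + 1) → Set α) i = s ∪ ⋃ i, t i := by
  ext
  simp

namespace SimpleGraph

variable {V : Type*} {G : SimpleGraph V} {r b u v w : V}

lemma Walk.dist_add_dist_eq_of_mem_support {p : G.Walk u w} (hp : p.length = G.dist u w)
    (hv : v ∈ p.support) : G.dist u v + G.dist v w = G.dist u w := by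
  classical
  rw [← length_eq_dist_of_subwalk hp (p.isSubwalk_takeUntil hv),
    ← length_eq_dist_of_subwalk hp (p.isSubwalk_dropUntil hv), ← Walk.length_append,
    p.take_spec hv, hp]

/-- Distance form of "`w` is a descendant of `u`": in a tree it agrees with the path form
(`isDescendant_iff_forall_isPath_mem_support`), and in any connected graph it is transitive. -/
def IsDescendant (G : SimpleGraph V) (r u w : V) : Prop :=
  G.dist r u + G.dist u w = G.dist r w

noncomputable instance (G : SimpleGraph V) (r u : V) : DecidablePred (G.IsDescendant r u) :=
  fun _ => inferInstanceAs (Decidable (_ = _))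

@[simp] lemma isDescendant_refl : G.IsDescendant r u u := by simp [IsDescendant]

@[simp] lemma isDescendant_root : G.IsDescendant r r w := by simp [IsDescendant]

lemma IsDescendant.trans (hG : G.Connected) (huv : G.IsDescendant r u v)
    (hvw : G.IsDescendant r v w) : G.IsDescendant r u w := by
  have := hG.dist_triangle (u := u) (v := v) (w := w)
  have := hG.dist_triangle (u := r) (v := u) (w := w)
  unfold IsDescendant at *
  omega

lemma IsDescendant.dist_lt (hG : G.Connected) (h : G.IsDescendant r u w) (hne : u ≠ w) :
    G.dist r u < G.dist r w := by
  have := hG.pos_dist_of_ne hne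
  unfold IsDescendant at h
  omega

lemma IsDescendant.of_dist_add_dist_eq (hG : G.Connected) (hbw : G.IsDescendant r b w)
    (hv : G.dist b v + G.dist v w = G.dist b w) :
    G.IsDescendant r b v ∧ G.IsDescendant r v w := by
  have := hG.dist_triangle (u := r) (v := b) (w := v)
  have := hG.dist_triangle (u := r) (v := v) (w := w)
  unfold IsDescendant at *
  omega

lemma isDescendant_iff_forall_isPath_mem_support (hG : G.IsTree) :
    (∀ p : G.Walk w r, p.IsPath → u ∈ p.support) ↔ G.IsDescendant r u w := by
  have hc := hG.connected
  obtain ⟨p₀, hp₀, hlen⟩ := hc.exists_path_of_dist w r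
  have hunique (p : G.Walk w r) (hp : p.IsPath) : p = p₀ :=
    congrArg Subtype.val ((hG.isAcyclic.subsingleton_path w r).elim ⟨p, hp⟩ ⟨p₀, hp₀⟩)
  have hcomm : G.IsDescendant r u w ↔ G.dist w u + G.dist u r = G.dist w r := by
    rw [IsDescendant, dist_comm (u := r) (v := u), dist_comm (u := r) (v := w),
      dist_comm (u := u) (v := w), add_comm]
  rw [hcomm]
  refine ⟨fun h => p₀.dist_add_dist_eq_of_mem_support hlen (h p₀ hp₀), fun h p hp => ?_⟩
  obtain ⟨q₁, hq₁⟩ := hc.exists_walk_length_eq_dist w u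
  obtain ⟨q₂, hq₂⟩ := hc.exists_walk_length_eq_dist u r
  have hq : (q₁.append q₂).IsPath :=
    Walk.isPath_of_length_eq_dist _ (by rw [Walk.length_append, hq₁, hq₂, h])
  rw [hunique p hp, ← hunique _ hq, Walk.mem_support_append_iff]
  exact Or.inr q₂.start_mem_support

def IsAncestorClosed (G : SimpleGraph V) (r : V) (A : Set V) : Prop :=
  ∀ ⦃v w⦄, w ∈ A → G.IsDescendant r v w → v ∈ A

lemma IsAncestorClosed.filter_not_isDescendant {A : Finset V} (hG : G.Connected)
    (hA : G.IsAncestorClosed r A) :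
    G.IsAncestorClosed r ↑{w ∈ A | ¬G.IsDescendant r u w} := by
  intro v w hw hvw
  simp only [coe_filter, Set.mem_ofPred_eq] at hw ⊢
  exact ⟨hA hw.1 hvw, fun huv => hw.2 (huv.trans hG hvw)⟩

lemma IsAncestorClosed.connected_induce_descendants {A : Finset V} (hG : G.Connected)
    (hA : G.IsAncestorClosed r A) (hb : b ∈ A) :
    (G.induce ↑{w ∈ A | G.IsDescendant r b w}).Connected := by
  refine induce_connected_of_patches b (by simpa using hb) fun {z} hz => ?_
  simp only [coe_filter, Set.mem_ofPred_eq] at hz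
  obtain ⟨p, hp⟩ := hG.exists_walk_length_eq_dist b z
  have hsupp : {v | v ∈ p.support} ⊆ ↑{w ∈ A | G.IsDescendant r b w} := by
    intro v hv
    obtain ⟨hbv, hvz⟩ := hz.2.of_dist_add_dist_eq hG (p.dist_add_dist_eq_of_mem_support hp hv)
    simpa using ⟨hA hz.1 hvz, hbv⟩
  exact ⟨_, hsupp, p.start_mem_support, p.end_mem_support,
    p.connected_induce_support.preconnected _ _⟩

def IsPrunedSubtree (G : SimpleGraph V) (r : V) (s : ℕ) (B : Set V) : Prop :=
  (G.induce B).Connected ∧ ∃ b ∈ B,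
    (∀ u ∈ B, u ≠ b → G.dist r b < G.dist r u) ∧
    (∀ u ∈ B, u ≠ b → {w ∈ B | G.IsDescendant r u w}.ncard < s)

lemma IsAncestorClosed.isPrunedSubtree_descendants {A : Finset V} {s : ℕ} (hG : G.Connected)
    (hA : G.IsAncestorClosed r A) (hb : b ∈ A)
    (hlight : ∀ u ∈ A, u ≠ b → G.IsDescendant r b u → #{w ∈ A | G.IsDescendant r u w} < s) :
    G.IsPrunedSubtree r s ↑{w ∈ A | G.IsDescendant r b w} := by
  refine ⟨hA.connected_induce_descendants hG hb, b, by simpa using hb, fun u hu hub => ?_,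
    fun u hu hub => ?_⟩
  all_goals simp only [coe_filter, Set.mem_ofPred_eq] at hu
  · exact hu.2.dist_lt hG (Ne.symm hub)
  · have hsub : {w ∈ (↑{w ∈ A | G.IsDescendant r b w} : Set V) | G.IsDescendant r u w} =
        ↑{w ∈ A | G.IsDescendant r u w} := by
      ext w
      simp only [coe_filter, Set.mem_ofPred_eq]
      exact ⟨fun h => ⟨h.1.1, h.2⟩, fun h => ⟨⟨h.1, hu.2.trans hG h.2⟩, h.2⟩⟩
    rw [hsub, Set.ncard_coe_finset]
    exact hlight u hu.1 hub hu.2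

theorem Connected.exists_partition_isPrunedSubtree (hG : G.Connected) (s : ℕ) (A : Finset V)
    (hr : r ∈ A) (hA : G.IsAncestorClosed r A) :
    ∃ (k : ℕ) (B : Fin k → Set V), k * s < #A + s ∧ Pairwise (Disjoint on B) ∧
      ⋃ i, B i = A ∧ ∀ i, G.IsPrunedSubtree r s (B i) := by
  classical
  induction A using Finset.strongInduction with | H A ih => ?_
  by_cases hheavy : ∃ u ∈ A, u ≠ r ∧ s ≤ #{w ∈ A | G.IsDescendant r u w}
  · obtain ⟨u, hu, hdeepest⟩ :=
      exists_max_image {u ∈ A | u ≠ r ∧ s ≤ #{w ∈ A | G.IsDescendant r u w}} (G.dist r)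
        (by simpa [Finset.Nonempty] using hheavy)
    simp only [mem_filter] at hu hdeepest
    obtain ⟨huA, hur, hus⟩ := hu
    obtain ⟨k, B, hk, hdisj, hunion, hpruned⟩ := ih {w ∈ A | ¬G.IsDescendant r u w}
      (filter_ssubset.2 ⟨u, huA, by simp⟩)
      (mem_filter.2 ⟨hr, fun hru => by simpa using hru.dist_lt hG hur⟩)
      (hA.filter_not_isDescendant hG)
    have hcard : #{w ∈ A | G.IsDescendant r u w} + #{w ∈ A | ¬G.IsDescendant r u w} = #A :=
      card_filter_add_card_filter_not _
    refine ⟨k + 1, Fin.cons ↑{w ∈ A | G.IsDescendant r u w} B, by rw [add_mul]; omega,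
      Set.pairwise_disjoint_fin_cons (fun i => ?_) hdisj, ?_, fun i => ?_⟩
    · refine Set.disjoint_of_subset_right (hunion ▸ Set.subset_iUnion B i) ?_
      exact disjoint_coe.2 (disjoint_filter_filter_not A A _)
    · rw [Set.iUnion_fin_cons, hunion, ← coe_union, filter_union_filter_not_eq]
    · induction i using Fin.cases with
      | succ i => exact hpruned i
      | zero =>
        refine hA.isPrunedSubtree_descendants hG huA fun w hwA hwu huw => ?_
        by_contra! hws
        have hlt := huw.dist_lt hG (Ne.symm hwu)
        have hle := hdeepest w ⟨hwA, fun hwr => by simp [hwr] at hlt, hws⟩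
        omega
  · push Not at hheavy
    refine ⟨1, fun _ => A, by simpa using card_pos.2 ⟨r, hr⟩,
      fun i j hij => absurd (Subsingleton.elim i j) hij, Set.iUnion_const _, fun _ => ?_⟩
    simpa using hA.isPrunedSubtree_descendants (b := r) (s := s) hG hr
      fun u hu hur _ => hheavy u hu hur

end SimpleGraph

/-- **Pruning a rooted cluster tree.** Every finite tree `T` on `n ≥ 1` vertices with root `r`
and every integer `s ≥ 1` admit a partition of the vertex set into at most `⌊n/s⌋ + 1` parts,
each inducing a connected subgraph (a subtree), such that in every part `B`, letting `b` be
the unique vertex of `B` closest to the root `r`, every vertex `u ∈ B`, `u ≠ b`, has fewer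
than `s` descendants inside `B` (where `w` is a descendant of `u` iff `u` lies on the unique
path in `T` from `w` to `r`). -/
theorem tree_pruning :
    ∀ (V : Type) [Fintype V] (T : SimpleGraph V) (r : V), T.IsTree →
      ∀ s : ℕ, 1 ≤ s →
      ∃ (k : ℕ) (B : Fin k → Set V),
        k ≤ Fintype.card V / s + 1 ∧
        (∀ i j, i ≠ j → Disjoint (B i) (B j)) ∧
        (⋃ i, B i) = Set.univ ∧
        (∀ i, (T.induce (B i)).Connected) ∧
        (∀ i, ∃ b ∈ B i,
          (∀ u ∈ B i, u ≠ b → T.dist r b < T.dist r u) ∧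
          (∀ u ∈ B i, u ≠ b →
            ({w ∈ B i | ∀ p : T.Walk w r, p.IsPath → u ∈ p.support}.ncard) < s)) := by
  intro V _ T r hT s hs
  obtain ⟨k, B, hk, hdisj, hunion, hpruned⟩ := hT.connected.exists_partition_isPrunedSubtree s
    univ (mem_univ r) fun _ _ _ _ => mem_coe.2 (mem_univ _)
  refine ⟨k, B, ?_, fun i j hij => hdisj hij, by simpa using hunion, fun i => (hpruned i).1,
    fun i => ?_⟩
  · rw [← Nat.add_div_right _ (by omega : 0 < s)]
    exact (Nat.le_div_iff_mul_le (by omega)).2 (by simpa using hk.le)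
  · obtain ⟨b, hb, hdist, hlight⟩ := (hpruned i).2
    refine ⟨b, hb, hdist, ?_⟩
    simpa only [isDescendant_iff_forall_isPath_mem_support hT] using hlight
end
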